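/- arXiv:2205.09902 — 4 statements merged into one kernel-verified Lean document; each statement's English description precedes it below -/
import Mathlib

section
/- For every n ≥ 0, the Apéry number A(n) = Σ_{k=0}^n binom(n,k)^2·binom(n+k,k)^2 satisfies A(2n) ≡ 1 (mod 8) and A(2n+1) ≡ 5 (mod 8). -/
/-!
Write `A(n) = ∑ₖ cₖ²` with `cₖ = C(n,k) C(n+k,k)`. Since `cₖ = C(n+k,2k) C(2k,k)` and central
binomial coefficients are even, `cₖ` is even for `k ≥ 1`, so `cₖ² ≡ 2cₖ (mod 8)` and
`A(n) ≡ 1 + 2 (D(n) - 1) (mod 8)`, where `D(n) = ∑ₖ cₖ` is the central Delannoy number.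
The identity `D(n) = ∑ⱼ C(n,j)² 2^(n-j)` gives `D(n) ≡ 1 + 2n² ≡ 1 + 2n (mod 4)`,
hence `A(n) ≡ 1 + 4n (mod 8)`.
-/

open Finset

namespace Nat

theorem sq_modEq_self_two (m : ℕ) : m ^ 2 ≡ m [MOD 2] := by
  rcases mod_two_eq_zero_or_one m with h | h <;> simp [ModEq, pow_mod, h]

theorem two_mul_sq_modEq_two_mul (m : ℕ) : 2 * m ^ 2 ≡ 2 * m [MOD 4] :=
  (sq_modEq_self_two m).mul_left' 2

theorem sq_modEq_two_mul_of_even {c : ℕ} (hc : Even c) : c ^ 2 ≡ 2 * c [MOD 8] := by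
  obtain ⟨d, rfl⟩ := hc
  have h := (sq_modEq_self_two d).mul_left' 4
  rwa [← two_mul, mul_pow, ← mul_assoc]

theorem add_choose_eq_sum_choose_mul_choose (m n : ℕ) :
    (m + n).choose n = ∑ j ∈ range (n + 1), m.choose j * n.choose j := by
  rw [add_choose_eq, Finset.Nat.sum_antidiagonal_eq_sum_range_succ_mk]
  exact sum_congr rfl fun j hj => by rw [choose_symm (mem_range_succ_iff.mp hj)]

theorem sum_choose_mul_choose (n j : ℕ) :
    ∑ k ∈ range (n + 1), n.choose k * k.choose j = n.choose j * 2 ^ (n - j) := by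
  rcases lt_or_ge n j with hnj | hjn
  · rw [choose_eq_zero_of_lt hnj, zero_mul]
    exact sum_eq_zero fun k hk => by
      rw [choose_eq_zero_of_lt ((mem_range_succ_iff.mp hk).trans_lt hnj), mul_zero]
  have below_j : ∑ k ∈ range j, n.choose k * k.choose j = 0 :=
    sum_eq_zero fun k hk => by rw [choose_eq_zero_of_lt (mem_range.mp hk), mul_zero]
  rw [← sum_range_add_sum_Ico _ (by omega : j ≤ n + 1), below_j, zero_add,
    sum_Ico_eq_sum_range, show n + 1 - j = n - j + 1 by omega, ← sum_range_choose, mul_sum]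
  refine sum_congr rfl fun i _ => ?_
  rw [choose_mul (le_add_right j i), Nat.add_sub_cancel_left]

def centralDelannoy (n : ℕ) : ℕ := ∑ k ∈ range (n + 1), n.choose k * (n + k).choose k

theorem centralDelannoy_eq_sum_choose_sq_mul_two_pow (n : ℕ) :
    centralDelannoy n = ∑ j ∈ range (n + 1), n.choose j ^ 2 * 2 ^ (n - j) := by
  calc centralDelannoy n
      = ∑ k ∈ range (n + 1), ∑ j ∈ range (n + 1), n.choose j * (n.choose k * k.choose j) := by
        refine sum_congr rfl fun k _ => ?_
        rw [Nat.add_comm n k, choose_symm_add, add_choose_eq_sum_choose_mul_choose, mul_sum]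
        exact sum_congr rfl fun j _ => by ring
    _ = ∑ j ∈ range (n + 1), n.choose j * ∑ k ∈ range (n + 1), n.choose k * k.choose j := by
        rw [sum_comm]
        simp_rw [mul_sum]
    _ = _ := by
        simp_rw [sum_choose_mul_choose]
        exact sum_congr rfl fun j _ => by ring

theorem centralDelannoy_modEq (n : ℕ) : centralDelannoy n ≡ 1 + 2 * n [MOD 4] := by
  rw [centralDelannoy_eq_sum_choose_sq_mul_two_pow]
  cases n with
  | zero => rfl
  | succ m =>
    have low_terms : ∑ j ∈ range m, (m + 1).choose j ^ 2 * 2 ^ (m + 1 - j) ≡ 0 [MOD 4] :=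
      ModEq.sum_zero fun j hj => by
        rw [show m + 1 - j = m - 1 - j + 2 by grind, pow_add]
        exact ((dvd_mul_left 4 _).mul_left _).modEq_zero_nat
    rw [sum_range_succ, sum_range_succ, choose_succ_self_right, choose_self,
      show m + 1 - m = 1 by omega, Nat.sub_self]
    simpa [mul_comm, add_comm] using (low_terms.add (two_mul_sq_modEq_two_mul (m + 1))).add_right 1

theorem even_choose_mul_add_choose {n k : ℕ} (hk : 0 < k) :
    Even (n.choose k * (n + k).choose k) := by
  have h : (n + k).choose (2 * k) * (2 * k).choose k = (n + k).choose k * n.choose k := by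
    rw [choose_mul (by omega)]
    congr 2 <;> omega
  rw [mul_comm, ← h, ← centralBinom_eq_two_mul_choose]
  exact (even_iff_two_dvd.mpr (two_dvd_centralBinom_of_one_le hk)).mul_left _

theorem sum_choose_sq_mul_add_choose_sq_modEq (n : ℕ) :
    ∑ k ∈ range (n + 1), n.choose k ^ 2 * (n + k).choose k ^ 2 ≡ 1 + 4 * n [MOD 8] := by
  have delannoy_tail : ∑ k ∈ range n, n.choose (k + 1) * (n + (k + 1)).choose (k + 1)
      ≡ 2 * n [MOD 4] := by
    have h := centralDelannoy_modEq n
    rw [centralDelannoy, sum_range_succ'] at h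
    exact ModEq.add_right_cancel' 1 (by simpa [add_comm] using h)
  calc ∑ k ∈ range (n + 1), n.choose k ^ 2 * (n + k).choose k ^ 2
      = ∑ k ∈ range n, (n.choose (k + 1) * (n + (k + 1)).choose (k + 1)) ^ 2 + 1 := by
        simp [sum_range_succ', mul_pow]
    _ ≡ ∑ k ∈ range n, 2 * (n.choose (k + 1) * (n + (k + 1)).choose (k + 1)) + 1 [MOD 8] :=
        (ModEq.sum fun k _ =>
          sq_modEq_two_mul_of_even (even_choose_mul_add_choose k.succ_pos)).add_right 1
    _ ≡ 2 * (2 * n) + 1 [MOD 8] := by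
        rw [← mul_sum]
        exact (delannoy_tail.mul_left' 2).add_right 1
    _ = 1 + 4 * n := by ring

end Nat

/-- The Apéry numbers `A(n) = Σ_k binom(n,k)² binom(n+k,k)²` satisfy
`A(2n) ≡ 1 (mod 8)` and `A(2n+1) ≡ 5 (mod 8)`. -/
theorem apery3_mod_eight (A : ℕ → ℕ)
    (hA : ∀ n, A n = ∑ k ∈ Finset.range (n + 1), (n.choose k) ^ 2 * ((n + k).choose k) ^ 2)
    (n : ℕ) :
    A (2 * n) ≡ 1 [MOD 8] ∧ A (2 * n + 1) ≡ 5 [MOD 8] := by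
  have even_index := Nat.sum_choose_sq_mul_add_choose_sq_modEq (2 * n)
  have odd_index := Nat.sum_choose_sq_mul_add_choose_sq_modEq (2 * n + 1)
  rw [← hA] at even_index odd_index
  refine ⟨even_index.trans ?_, odd_index.trans ?_⟩ <;> unfold Nat.ModEq <;> omega
end

section
/- For all n ≥ 0, the Motzkin number M(n) is not divisible by 25. -/
namespace Motzkin25aux

def T : ℕ → ℤ → ℤ
  | 0, m => if m = 0 then 1 else 0
  | (n+1), m => T n m + T n (m-1) + T n (m-2)

lemma T_sym (n : ℕ) : ∀ m : ℤ, T n m = T n (2*n - m) := by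
  induction n with
  | zero => intro m; simp only [T, Nat.cast_zero]; split_ifs <;> omega
  | succ p ih =>
    intro m
    simp only [T]
    rw [ih m, ih (m-1), ih (m-2)]
    push_cast
    rw [show 2*((p:ℤ)+1) - m - 2 = 2*(p:ℤ) - m by ring,
        show 2*((p:ℤ)+1) - m - 1 = 2*(p:ℤ) - (m-1) by ring,
        show 2*((p:ℤ)+1) - m = 2*(p:ℤ) - (m-2) by ring]
    ring

lemma T_deriv (n : ℕ) : ∀ m : ℤ, m * T (n+1) m = ((n:ℤ)+1) * (T n (m-1) + 2 * T n (m-2)) := by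
  induction n with
  | zero =>
    intro m
    simp only [T]
    split_ifs <;> push_cast <;> omega
  | succ p ih =>
    intro m
    simp only [T]
    have h1 := ih m
    have h2 := ih (m-1)
    have h3 := ih (m-2)
    simp only [T] at h1 h2 h3
    simp only [sub_sub] at *
    norm_num at *
    linear_combination h1 + h2 + h3

lemma T_holo (k : ℕ) :
    ((k:ℤ)+4) * (T (k+2) (k+2) - T (k+2) ((k:ℤ)+4))
      = (2*(k:ℤ)+5) * (T (k+1) ((k:ℤ)+1) - T (k+1) ((k:ℤ)+3))
        + 3*((k:ℤ)+1) * (T k k - T k ((k:ℤ)+2)) := by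
  have s1 : T k ((k:ℤ)-1) = T k ((k:ℤ)+1) := by
    rw [T_sym k ((k:ℤ)-1)]; congr 1; ring
  have s2 : T k ((k:ℤ)-2) = T k ((k:ℤ)+2) := by
    rw [T_sym k ((k:ℤ)-2)]; congr 1; ring
  have s3 : T k ((k:ℤ)-3) = T k ((k:ℤ)+3) := by
    rw [T_sym k ((k:ℤ)-3)]; congr 1; ring
  have s4 : T k ((k:ℤ)-4) = T k ((k:ℤ)+4) := by
    rw [T_sym k ((k:ℤ)-4)]; congr 1; ring
  have d1 := T_deriv k ((k:ℤ)-2)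
  have d2 := T_deriv k (k:ℤ)
  simp only [T] at *
  simp only [sub_sub] at *
  norm_num at *
  push_cast at *
  rw [show ((k:ℤ)+2-1) = (k:ℤ)+1 by ring, show ((k:ℤ)+2-3) = (k:ℤ)-1 by ring,
      show ((k:ℤ)+2-4) = (k:ℤ)-2 by ring, show ((k:ℤ)+4-1) = (k:ℤ)+3 by ring,
      show ((k:ℤ)+4-2) = (k:ℤ)+2 by ring, show ((k:ℤ)+4-3) = (k:ℤ)+1 by ring,
      show ((k:ℤ)+1-2) = (k:ℤ)-1 by ring, show ((k:ℤ)+3-1) = (k:ℤ)+2 by ring,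
      show ((k:ℤ)+3-2) = (k:ℤ)+1 by ring]
  simp only [s1, s2, s3, s4] at d1 d2 ⊢
  linear_combination d1 - 3*d2

def chi (r : ℕ) (m : ℤ) : ℤ := if (5:ℤ) ∣ m then T r (m/5) else 0

def W (r : ℕ) (m : ℤ) : ℤ :=
  chi r (m-1) + 3*chi r (m-2) + 6*chi r (m-3) + 9*chi r (m-4) + 10*chi r (m-5)
    + 9*chi r (m-6) + 6*chi r (m-7) + 3*chi r (m-8) + chi r (m-9)

lemma Tp1 (n : ℕ) (m : ℤ) : T (n+1) m =
    T n m
      + T n (m-1)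
      + T n (m-2) := by
  simp only [T]

lemma Tp2 (n : ℕ) (m : ℤ) : T (n+2) m =
    T n m
      + 2*T n (m-1)
      + 3*T n (m-2)
      + 2*T n (m-3)
      + T n (m-4) := by
  simp only [T, sub_sub]
  try norm_num
  try ring

lemma Tp3 (n : ℕ) (m : ℤ) : T (n+3) m =
    T n m
      + 3*T n (m-1)
      + 6*T n (m-2)
      + 7*T n (m-3)
      + 6*T n (m-4)
      + 3*T n (m-5)
      + T n (m-6) := by
  simp only [T, sub_sub]
  try norm_num
  try ring

lemma Tp4 (n : ℕ) (m : ℤ) : T (n+4) m =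
    T n m
      + 4*T n (m-1)
      + 10*T n (m-2)
      + 16*T n (m-3)
      + 19*T n (m-4)
      + 16*T n (m-5)
      + 10*T n (m-6)
      + 4*T n (m-7)
      + T n (m-8) := by
  simp only [T, sub_sub]
  try norm_num
  try ring

lemma Tp5 (n : ℕ) (m : ℤ) : T (n+5) m =
    T n m
      + 5*T n (m-1)
      + 15*T n (m-2)
      + 30*T n (m-3)
      + 45*T n (m-4)
      + 51*T n (m-5)
      + 45*T n (m-6)
      + 30*T n (m-7)
      + 15*T n (m-8)
      + 5*T n (m-9)
      + T n (m-10) := by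
  simp only [T, sub_sub]
  try norm_num
  try ring

lemma chiPascal (r : ℕ) (m : ℤ) : chi r m + chi r (m-5) + chi r (m-10) = chi (r+1) m := by
  unfold chi
  by_cases h : (5:ℤ) ∣ m
  · rw [if_pos h, if_pos (by omega : (5:ℤ) ∣ m - 5), if_pos (by omega : (5:ℤ) ∣ m - 10), if_pos h]
    simp only [T]
    rw [show (m-5)/5 = m/5 - 1 by omega, show (m-10)/5 = m/5 - 2 by omega]
  · rw [if_neg h, if_neg (by omega : ¬ (5:ℤ) ∣ m - 5), if_neg (by omega : ¬ (5:ℤ) ∣ m - 10), if_neg h]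
    ring

lemma LW (q : ℕ) (m : ℤ) :
    (q:ℤ) * (W (q-1) m + W (q-1) (m-5) + W (q-1) (m-10)) = (q:ℤ) * W q m := by
  cases q with
  | zero => simp
  | succ p =>
    have key : W p m + W p (m-5) + W p (m-10) = W (p+1) m := by
      simp only [W]
      have h1 := chiPascal p (m - 1)
      have h2 := chiPascal p (m - 2)
      have h3 := chiPascal p (m - 3)
      have h4 := chiPascal p (m - 4)
      have h5 := chiPascal p (m - 5)
      have h6 := chiPascal p (m - 6)
      have h7 := chiPascal p (m - 7)
      have h8 := chiPascal p (m - 8)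
      have h9 := chiPascal p (m - 9)
      simp only [sub_sub] at h1 h2 h3 h4 h5 h6 h7 h8 h9 ⊢
      norm_num at h1 h2 h3 h4 h5 h6 h7 h8 h9 ⊢
      linear_combination h1 + 3*h2 + 6*h3 + 9*h4 + 10*h5 + 9*h6 + 6*h7 + 3*h8 + h9
    simp only [Nat.add_sub_cancel]
    rw [key]

lemma key5 (x y : ℤ) (h : ((x : ℤ) : ZMod 5) = ((y : ℤ) : ZMod 5)) :
    ((5*x : ℤ) : ZMod 25) = ((5*y : ℤ) : ZMod 25) := by
  rw [ZMod.intCast_eq_intCast_iff] at h ⊢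
  have h2 := h.mul_left' (c := 5)
  norm_num at h2
  exact h2

lemma L5 (q : ℕ) : ∀ m : ℤ, ((T (5*q) m : ℤ) : ZMod 5) = ((chi q m : ℤ) : ZMod 5) := by
  induction q with
  | zero =>
    intro m
    have h : chi 0 m = T 0 m := by
      simp only [chi, T]
      split_ifs <;> omega
    rw [Nat.mul_zero, h]
  | succ p ih =>
    intro m
    rw [show 5*(p+1) = 5*p+5 by ring, Tp5 (5*p) m]
    push_cast
    rw [ih m, ih (m-1), ih (m-2), ih (m-3), ih (m-4), ih (m-5), ih (m-6), ih (m-7), ih (m-8),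
      ih (m-9), ih (m-10)]
    have hCP := congrArg (fun z : ℤ => (z : ZMod 5)) (chiPascal p m)
    push_cast at hCP
    have h5z : (5 : ZMod 5) = 0 := by decide
    linear_combination hCP + h5z * (((chi p (m-1) : ℤ) : ZMod 5) + 3*((chi p (m-2) : ℤ) : ZMod 5)
      + 6*((chi p (m-3) : ℤ) : ZMod 5) + 9*((chi p (m-4) : ℤ) : ZMod 5)
      + 10*((chi p (m-5) : ℤ) : ZMod 5) + 9*((chi p (m-6) : ℤ) : ZMod 5)
      + 6*((chi p (m-7) : ℤ) : ZMod 5) + 3*((chi p (m-8) : ℤ) : ZMod 5)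
      + ((chi p (m-9) : ℤ) : ZMod 5))

lemma L25 (q : ℕ) : ∀ m : ℤ,
    ((T (5*q) m : ℤ) : ZMod 25) = ((chi q m + 5 * q * W (q-1) m : ℤ) : ZMod 25) := by
  induction q with
  | zero =>
    intro m
    have h : chi 0 m = T 0 m := by
      simp only [chi, T]
      split_ifs <;> omega
    rw [Nat.mul_zero, h]
    push_cast
    ring
  | succ p ih =>
    intro m
    rw [show 5*(p+1) = 5*p+5 by ring, Tp5 (5*p) m]
    push_cast
    rw [ih m, ih (m-1), ih (m-2), ih (m-3), ih (m-4), ih (m-5), ih (m-6), ih (m-7), ih (m-8),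
      ih (m-9), ih (m-10)]
    have hCP := congrArg (fun z : ℤ => (z : ZMod 25)) (chiPascal p m)
    have hLW := congrArg (fun z : ℤ => (z : ZMod 25)) (LW p m)
    have hWdef := congrArg (fun z : ℤ => (z : ZMod 25)) (show W p m =
      chi p (m-1) + 3*chi p (m-2) + 6*chi p (m-3) + 9*chi p (m-4) + 10*chi p (m-5)
        + 9*chi p (m-6) + 6*chi p (m-7) + 3*chi p (m-8) + chi p (m-9) from by
          simp only [W])
    push_cast at hCP hLW hWdef ⊢
    have h25 : (25 : ZMod 25) = 0 := by decide
    linear_combination hCP - 5 * hWdef + 5 * hLW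
      + h25 * ( ((p:ZMod 25)) * ( ((W (p-1) (m-1) :ℤ) : ZMod 25) + 3*((W (p-1) (m-2) :ℤ) : ZMod 25) + 6*((W (p-1) (m-3) :ℤ) : ZMod 25) + 9*((W (p-1) (m-4) :ℤ) : ZMod 25) + 10*((W (p-1) (m-5) :ℤ) : ZMod 25) + 9*((W (p-1) (m-6) :ℤ) : ZMod 25) + 6*((W (p-1) (m-7) :ℤ) : ZMod 25) + 3*((W (p-1) (m-8) :ℤ) : ZMod 25) + ((W (p-1) (m-9) :ℤ) : ZMod 25) ) )

lemma chiP_m8 (r : ℕ) : chi r (-8 + (r:ℤ)*5) = 0 := by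
  unfold chi
  rw [if_neg (by omega : ¬ (5:ℤ) ∣ (-8 + (r:ℤ)*5))]

lemma chiP_m7 (r : ℕ) : chi r (-7 + (r:ℤ)*5) = 0 := by
  unfold chi
  rw [if_neg (by omega : ¬ (5:ℤ) ∣ (-7 + (r:ℤ)*5))]

lemma chiP_m6 (r : ℕ) : chi r (-6 + (r:ℤ)*5) = 0 := by
  unfold chi
  rw [if_neg (by omega : ¬ (5:ℤ) ∣ (-6 + (r:ℤ)*5))]

lemma chiP_m5 (r : ℕ) : chi r (-5 + (r:ℤ)*5) = T r ((r:ℤ) + 1) := by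
  unfold chi
  rw [if_pos (by omega : (5:ℤ) ∣ (-5 + (r:ℤ)*5))]
  rw [show (-5 + (r:ℤ)*5)/5 = (r:ℤ) + (-1) by omega]
  rw [T_sym r ((r:ℤ) + (-1))]
  congr 1
  push_cast
  ring

lemma chiP_m4 (r : ℕ) : chi r (-4 + (r:ℤ)*5) = 0 := by
  unfold chi
  rw [if_neg (by omega : ¬ (5:ℤ) ∣ (-4 + (r:ℤ)*5))]

lemma chiP_m3 (r : ℕ) : chi r (-3 + (r:ℤ)*5) = 0 := by
  unfold chi
  rw [if_neg (by omega : ¬ (5:ℤ) ∣ (-3 + (r:ℤ)*5))]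

lemma chiP_m2 (r : ℕ) : chi r (-2 + (r:ℤ)*5) = 0 := by
  unfold chi
  rw [if_neg (by omega : ¬ (5:ℤ) ∣ (-2 + (r:ℤ)*5))]

lemma chiP_m1 (r : ℕ) : chi r (-1 + (r:ℤ)*5) = 0 := by
  unfold chi
  rw [if_neg (by omega : ¬ (5:ℤ) ∣ (-1 + (r:ℤ)*5))]

lemma chiP_0 (r : ℕ) : chi r (0 + (r:ℤ)*5) = T r (r:ℤ) := by
  unfold chi
  rw [if_pos (by omega : (5:ℤ) ∣ (0 + (r:ℤ)*5))]
  rw [show (0 + (r:ℤ)*5)/5 = (r:ℤ) by omega]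

lemma chiP_1 (r : ℕ) : chi r (1 + (r:ℤ)*5) = 0 := by
  unfold chi
  rw [if_neg (by omega : ¬ (5:ℤ) ∣ (1 + (r:ℤ)*5))]

lemma chiP_2 (r : ℕ) : chi r (2 + (r:ℤ)*5) = 0 := by
  unfold chi
  rw [if_neg (by omega : ¬ (5:ℤ) ∣ (2 + (r:ℤ)*5))]

lemma chiP_3 (r : ℕ) : chi r (3 + (r:ℤ)*5) = 0 := by
  unfold chi
  rw [if_neg (by omega : ¬ (5:ℤ) ∣ (3 + (r:ℤ)*5))]

lemma chiP_4 (r : ℕ) : chi r (4 + (r:ℤ)*5) = 0 := by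
  unfold chi
  rw [if_neg (by omega : ¬ (5:ℤ) ∣ (4 + (r:ℤ)*5))]

lemma chiP_5 (r : ℕ) : chi r (5 + (r:ℤ)*5) = T r ((r:ℤ) + 1) := by
  unfold chi
  rw [if_pos (by omega : (5:ℤ) ∣ (5 + (r:ℤ)*5))]
  rw [show (5 + (r:ℤ)*5)/5 = (r:ℤ) + 1 by omega]

lemma chiP_6 (r : ℕ) : chi r (6 + (r:ℤ)*5) = 0 := by
  unfold chi
  rw [if_neg (by omega : ¬ (5:ℤ) ∣ (6 + (r:ℤ)*5))]

lemma chiP_7 (r : ℕ) : chi r (7 + (r:ℤ)*5) = 0 := by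
  unfold chi
  rw [if_neg (by omega : ¬ (5:ℤ) ∣ (7 + (r:ℤ)*5))]

lemma chiP_8 (r : ℕ) : chi r (8 + (r:ℤ)*5) = 0 := by
  unfold chi
  rw [if_neg (by omega : ¬ (5:ℤ) ∣ (8 + (r:ℤ)*5))]

lemma chiP_9 (r : ℕ) : chi r (9 + (r:ℤ)*5) = 0 := by
  unfold chi
  rw [if_neg (by omega : ¬ (5:ℤ) ∣ (9 + (r:ℤ)*5))]

lemma chiP_10 (r : ℕ) : chi r (10 + (r:ℤ)*5) = T r ((r:ℤ) + 2) := by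
  unfold chi
  rw [if_pos (by omega : (5:ℤ) ∣ (10 + (r:ℤ)*5))]
  rw [show (10 + (r:ℤ)*5)/5 = (r:ℤ) + 2 by omega]

lemma chiP_11 (r : ℕ) : chi r (11 + (r:ℤ)*5) = 0 := by
  unfold chi
  rw [if_neg (by omega : ¬ (5:ℤ) ∣ (11 + (r:ℤ)*5))]

lemma chiP_z (r : ℕ) : chi r ((r:ℤ)*5) = T r (r:ℤ) := by
  have := chiP_0 r
  rw [show (r:ℤ)*5 = 0 + (r:ℤ)*5 by ring]
  exact this

lemma chiQ_1 (p : ℕ) : chi (1+p) (1 + (p:ℤ)*5) = 0 := by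
  unfold chi
  rw [if_neg (by omega : ¬ (5:ℤ) ∣ (1 + (p:ℤ)*5))]

lemma chiQ_2 (p : ℕ) : chi (1+p) (2 + (p:ℤ)*5) = 0 := by
  unfold chi
  rw [if_neg (by omega : ¬ (5:ℤ) ∣ (2 + (p:ℤ)*5))]

lemma chiQ_3 (p : ℕ) : chi (1+p) (3 + (p:ℤ)*5) = 0 := by
  unfold chi
  rw [if_neg (by omega : ¬ (5:ℤ) ∣ (3 + (p:ℤ)*5))]

lemma chiQ_4 (p : ℕ) : chi (1+p) (4 + (p:ℤ)*5) = 0 := by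
  unfold chi
  rw [if_neg (by omega : ¬ (5:ℤ) ∣ (4 + (p:ℤ)*5))]

lemma chiQ_5 (p : ℕ) : chi (1+p) (5 + (p:ℤ)*5) = T (1+p) (1 + (p:ℤ)) := by
  unfold chi
  rw [if_pos (by omega : (5:ℤ) ∣ (5 + (p:ℤ)*5))]
  rw [show (5 + (p:ℤ)*5)/5 = 1 + (p:ℤ) by omega]

lemma chiQ_6 (p : ℕ) : chi (1+p) (6 + (p:ℤ)*5) = 0 := by
  unfold chi
  rw [if_neg (by omega : ¬ (5:ℤ) ∣ (6 + (p:ℤ)*5))]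

lemma chiQ_7 (p : ℕ) : chi (1+p) (7 + (p:ℤ)*5) = 0 := by
  unfold chi
  rw [if_neg (by omega : ¬ (5:ℤ) ∣ (7 + (p:ℤ)*5))]

lemma chiQ_8 (p : ℕ) : chi (1+p) (8 + (p:ℤ)*5) = 0 := by
  unfold chi
  rw [if_neg (by omega : ¬ (5:ℤ) ∣ (8 + (p:ℤ)*5))]

lemma chiQ_9 (p : ℕ) : chi (1+p) (9 + (p:ℤ)*5) = 0 := by
  unfold chi
  rw [if_neg (by omega : ¬ (5:ℤ) ∣ (9 + (p:ℤ)*5))]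

lemma chiQ_10 (p : ℕ) : chi (1+p) (10 + (p:ℤ)*5) = T (1+p) (2 + (p:ℤ)) := by
  unfold chi
  rw [if_pos (by omega : (5:ℤ) ∣ (10 + (p:ℤ)*5))]
  rw [show (10 + (p:ℤ)*5)/5 = 2 + (p:ℤ) by omega]

lemma chiQ_11 (p : ℕ) : chi (1+p) (11 + (p:ℤ)*5) = 0 := by
  unfold chi
  rw [if_neg (by omega : ¬ (5:ℤ) ∣ (11 + (p:ℤ)*5))]


def c0 (n : ℕ) : ZMod 25 := ((T n (n:ℤ) : ℤ) : ZMod 25)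
def c1 (n : ℕ) : ZMod 25 := ((T n ((n:ℤ)+1) : ℤ) : ZMod 25)
def c2 (n : ℕ) : ZMod 25 := ((T n ((n:ℤ)+2) : ℤ) : ZMod 25)
def u0 (n : ℕ) : ZMod 25 := ((5 * (n:ℤ) * T (n-1) ((n:ℤ)-1) : ℤ) : ZMod 25)
def u1 (n : ℕ) : ZMod 25 := ((5 * (n:ℤ) * T (n-1) ((n:ℤ)) : ℤ) : ZMod 25)
def u2 (n : ℕ) : ZMod 25 := ((5 * (n:ℤ) * T (n-1) ((n:ℤ)+1) : ℤ) : ZMod 25)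

lemma tc0_0 (p : ℕ) : c0 (5*(p+1)+0) = c0 (p+1) + 10 * u0 (p+1) := by
  simp only [c0, c1, c2, u0, u1, u2, Nat.add_sub_cancel]
  simp only [Nat.add_zero]
  try push_cast
  try simp only [L25]
  try simp only [Nat.add_sub_cancel, W]
  try push_cast
  try ring_nf
  try simp only [chiP_m8, chiP_m7, chiP_m6, chiP_m5, chiP_m4, chiP_m3, chiP_m2, chiP_m1, chiP_0, chiP_1, chiP_2, chiP_3, chiP_4, chiP_5, chiP_6, chiP_7, chiP_8, chiP_9, chiP_10, chiP_11, chiP_z, chiQ_1, chiQ_2, chiQ_3, chiQ_4, chiQ_5, chiQ_6, chiQ_7, chiQ_8, chiQ_9, chiQ_10, chiQ_11]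
  try push_cast
  try ring_nf
  try reduce_mod_char
  try ring

lemma tc1_0 (p : ℕ) : c1 (5*(p+1)+0) = 9 * u0 (p+1) + u1 (p+1) := by
  simp only [c0, c1, c2, u0, u1, u2, Nat.add_sub_cancel]
  simp only [Nat.add_zero]
  try push_cast
  try simp only [L25]
  try simp only [Nat.add_sub_cancel, W]
  try push_cast
  try ring_nf
  try simp only [chiP_m8, chiP_m7, chiP_m6, chiP_m5, chiP_m4, chiP_m3, chiP_m2, chiP_m1, chiP_0, chiP_1, chiP_2, chiP_3, chiP_4, chiP_5, chiP_6, chiP_7, chiP_8, chiP_9, chiP_10, chiP_11, chiP_z, chiQ_1, chiQ_2, chiQ_3, chiQ_4, chiQ_5, chiQ_6, chiQ_7, chiQ_8, chiQ_9, chiQ_10, chiQ_11]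
  try push_cast
  try ring_nf
  try reduce_mod_char
  try ring

lemma tc2_0 (p : ℕ) : c2 (5*(p+1)+0) = 6 * u0 (p+1) + 3 * u1 (p+1) := by
  simp only [c0, c1, c2, u0, u1, u2, Nat.add_sub_cancel]
  simp only [Nat.add_zero]
  try push_cast
  try simp only [L25]
  try simp only [Nat.add_sub_cancel, W]
  try push_cast
  try ring_nf
  try simp only [chiP_m8, chiP_m7, chiP_m6, chiP_m5, chiP_m4, chiP_m3, chiP_m2, chiP_m1, chiP_0, chiP_1, chiP_2, chiP_3, chiP_4, chiP_5, chiP_6, chiP_7, chiP_8, chiP_9, chiP_10, chiP_11, chiP_z, chiQ_1, chiQ_2, chiQ_3, chiQ_4, chiQ_5, chiQ_6, chiQ_7, chiQ_8, chiQ_9, chiQ_10, chiQ_11]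
  try push_cast
  try ring_nf
  try reduce_mod_char
  try ring

lemma tc0_1 (p : ℕ) : c0 (5*(p+1)+1) = c0 (p+1) + 3 * u0 (p+1) + 2 * u1 (p+1) := by
  simp only [c0, c1, c2, u0, u1, u2, Nat.add_sub_cancel]
  rw [Tp1]
  try push_cast
  try simp only [L25]
  try simp only [Nat.add_sub_cancel, W]
  try push_cast
  try ring_nf
  try simp only [chiP_m8, chiP_m7, chiP_m6, chiP_m5, chiP_m4, chiP_m3, chiP_m2, chiP_m1, chiP_0, chiP_1, chiP_2, chiP_3, chiP_4, chiP_5, chiP_6, chiP_7, chiP_8, chiP_9, chiP_10, chiP_11, chiP_z, chiQ_1, chiQ_2, chiQ_3, chiQ_4, chiQ_5, chiQ_6, chiQ_7, chiQ_8, chiQ_9, chiQ_10, chiQ_11]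
  try push_cast
  try ring_nf
  try reduce_mod_char
  try ring

lemma tc1_1 (p : ℕ) : c1 (5*(p+1)+1) = c0 (p+1) + 4 * u1 (p+1) := by
  simp only [c0, c1, c2, u0, u1, u2, Nat.add_sub_cancel]
  rw [Tp1]
  try push_cast
  try simp only [L25]
  try simp only [Nat.add_sub_cancel, W]
  try push_cast
  try ring_nf
  try simp only [chiP_m8, chiP_m7, chiP_m6, chiP_m5, chiP_m4, chiP_m3, chiP_m2, chiP_m1, chiP_0, chiP_1, chiP_2, chiP_3, chiP_4, chiP_5, chiP_6, chiP_7, chiP_8, chiP_9, chiP_10, chiP_11, chiP_z, chiQ_1, chiQ_2, chiQ_3, chiQ_4, chiQ_5, chiQ_6, chiQ_7, chiQ_8, chiQ_9, chiQ_10, chiQ_11]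
  try push_cast
  try ring_nf
  try reduce_mod_char
  try ring

lemma tc2_1 (p : ℕ) : c2 (5*(p+1)+1) = 18 * u0 (p+1) + 10 * u1 (p+1) := by
  simp only [c0, c1, c2, u0, u1, u2, Nat.add_sub_cancel]
  rw [Tp1]
  try push_cast
  try simp only [L25]
  try simp only [Nat.add_sub_cancel, W]
  try push_cast
  try ring_nf
  try simp only [chiP_m8, chiP_m7, chiP_m6, chiP_m5, chiP_m4, chiP_m3, chiP_m2, chiP_m1, chiP_0, chiP_1, chiP_2, chiP_3, chiP_4, chiP_5, chiP_6, chiP_7, chiP_8, chiP_9, chiP_10, chiP_11, chiP_z, chiQ_1, chiQ_2, chiQ_3, chiQ_4, chiQ_5, chiQ_6, chiQ_7, chiQ_8, chiQ_9, chiQ_10, chiQ_11]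
  try push_cast
  try ring_nf
  try reduce_mod_char
  try ring

lemma tc0_2 (p : ℕ) : c0 (5*(p+1)+2) = 3 * c0 (p+1) + 3 * u0 (p+1) + 10 * u1 (p+1) := by
  simp only [c0, c1, c2, u0, u1, u2, Nat.add_sub_cancel]
  rw [Tp2]
  try push_cast
  try simp only [L25]
  try simp only [Nat.add_sub_cancel, W]
  try push_cast
  try ring_nf
  try simp only [chiP_m8, chiP_m7, chiP_m6, chiP_m5, chiP_m4, chiP_m3, chiP_m2, chiP_m1, chiP_0, chiP_1, chiP_2, chiP_3, chiP_4, chiP_5, chiP_6, chiP_7, chiP_8, chiP_9, chiP_10, chiP_11, chiP_z, chiQ_1, chiQ_2, chiQ_3, chiQ_4, chiQ_5, chiQ_6, chiQ_7, chiQ_8, chiQ_9, chiQ_10, chiQ_11]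
  try push_cast
  try ring_nf
  try reduce_mod_char
  try ring

lemma tc1_2 (p : ℕ) : c1 (5*(p+1)+2) = 2 * c0 (p+1) + 21 * u0 (p+1) + 16 * u1 (p+1) := by
  simp only [c0, c1, c2, u0, u1, u2, Nat.add_sub_cancel]
  rw [Tp2]
  try push_cast
  try simp only [L25]
  try simp only [Nat.add_sub_cancel, W]
  try push_cast
  try ring_nf
  try simp only [chiP_m8, chiP_m7, chiP_m6, chiP_m5, chiP_m4, chiP_m3, chiP_m2, chiP_m1, chiP_0, chiP_1, chiP_2, chiP_3, chiP_4, chiP_5, chiP_6, chiP_7, chiP_8, chiP_9, chiP_10, chiP_11, chiP_z, chiQ_1, chiQ_2, chiQ_3, chiQ_4, chiQ_5, chiQ_6, chiQ_7, chiQ_8, chiQ_9, chiQ_10, chiQ_11]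
  try push_cast
  try ring_nf
  try reduce_mod_char
  try ring

lemma tc2_2 (p : ℕ) : c2 (5*(p+1)+2) = c0 (p+1) + 3 * u0 (p+1) + 7 * u1 (p+1) := by
  simp only [c0, c1, c2, u0, u1, u2, Nat.add_sub_cancel]
  rw [Tp2]
  try push_cast
  try simp only [L25]
  try simp only [Nat.add_sub_cancel, W]
  try push_cast
  try ring_nf
  try simp only [chiP_m8, chiP_m7, chiP_m6, chiP_m5, chiP_m4, chiP_m3, chiP_m2, chiP_m1, chiP_0, chiP_1, chiP_2, chiP_3, chiP_4, chiP_5, chiP_6, chiP_7, chiP_8, chiP_9, chiP_10, chiP_11, chiP_z, chiQ_1, chiQ_2, chiQ_3, chiQ_4, chiQ_5, chiQ_6, chiQ_7, chiQ_8, chiQ_9, chiQ_10, chiQ_11]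
  try push_cast
  try ring_nf
  try reduce_mod_char
  try ring

lemma tc0_3 (p : ℕ) : c0 (5*(p+1)+3) = 7 * c0 (p+1) + 20 * u0 (p+1) + 17 * u1 (p+1) := by
  simp only [c0, c1, c2, u0, u1, u2, Nat.add_sub_cancel]
  rw [Tp3]
  try push_cast
  try simp only [L25]
  try simp only [Nat.add_sub_cancel, W]
  try push_cast
  try ring_nf
  try simp only [chiP_m8, chiP_m7, chiP_m6, chiP_m5, chiP_m4, chiP_m3, chiP_m2, chiP_m1, chiP_0, chiP_1, chiP_2, chiP_3, chiP_4, chiP_5, chiP_6, chiP_7, chiP_8, chiP_9, chiP_10, chiP_11, chiP_z, chiQ_1, chiQ_2, chiQ_3, chiQ_4, chiQ_5, chiQ_6, chiQ_7, chiQ_8, chiQ_9, chiQ_10, chiQ_11]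
  try push_cast
  try ring_nf
  try reduce_mod_char
  try ring

lemma tc1_3 (p : ℕ) : c1 (5*(p+1)+3) = 6 * c0 (p+1) + 2 * u0 (p+1) + 8 * u1 (p+1) := by
  simp only [c0, c1, c2, u0, u1, u2, Nat.add_sub_cancel]
  rw [Tp3]
  try push_cast
  try simp only [L25]
  try simp only [Nat.add_sub_cancel, W]
  try push_cast
  try ring_nf
  try simp only [chiP_m8, chiP_m7, chiP_m6, chiP_m5, chiP_m4, chiP_m3, chiP_m2, chiP_m1, chiP_0, chiP_1, chiP_2, chiP_3, chiP_4, chiP_5, chiP_6, chiP_7, chiP_8, chiP_9, chiP_10, chiP_11, chiP_z, chiQ_1, chiQ_2, chiQ_3, chiQ_4, chiQ_5, chiQ_6, chiQ_7, chiQ_8, chiQ_9, chiQ_10, chiQ_11]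
  try push_cast
  try ring_nf
  try reduce_mod_char
  try ring

lemma tc2_3 (p : ℕ) : c2 (5*(p+1)+3) = 3 * c0 (p+1) + c1 (p+1) + 6 * u0 (p+1) + u1 (p+1) := by
  simp only [c0, c1, c2, u0, u1, u2, Nat.add_sub_cancel]
  rw [Tp3]
  try push_cast
  try simp only [L25]
  try simp only [Nat.add_sub_cancel, W]
  try push_cast
  try ring_nf
  try simp only [chiP_m8, chiP_m7, chiP_m6, chiP_m5, chiP_m4, chiP_m3, chiP_m2, chiP_m1, chiP_0, chiP_1, chiP_2, chiP_3, chiP_4, chiP_5, chiP_6, chiP_7, chiP_8, chiP_9, chiP_10, chiP_11, chiP_z, chiQ_1, chiQ_2, chiQ_3, chiQ_4, chiQ_5, chiQ_6, chiQ_7, chiQ_8, chiQ_9, chiQ_10, chiQ_11]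
  try push_cast
  try ring_nf
  try reduce_mod_char
  try ring

lemma tc0_4 (p : ℕ) : c0 (5*(p+1)+4) = 19 * c0 (p+1) + 24 * u0 (p+1) + 8 * u1 (p+1) := by
  simp only [c0, c1, c2, u0, u1, u2, Nat.add_sub_cancel]
  rw [Tp4]
  try push_cast
  try simp only [L25]
  try simp only [Nat.add_sub_cancel, W]
  try push_cast
  try ring_nf
  try simp only [chiP_m8, chiP_m7, chiP_m6, chiP_m5, chiP_m4, chiP_m3, chiP_m2, chiP_m1, chiP_0, chiP_1, chiP_2, chiP_3, chiP_4, chiP_5, chiP_6, chiP_7, chiP_8, chiP_9, chiP_10, chiP_11, chiP_z, chiQ_1, chiQ_2, chiQ_3, chiQ_4, chiQ_5, chiQ_6, chiQ_7, chiQ_8, chiQ_9, chiQ_10, chiQ_11]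
  try push_cast
  try ring_nf
  try reduce_mod_char
  try ring

lemma tc1_4 (p : ℕ) : c1 (5*(p+1)+4) = 16 * c0 (p+1) + c1 (p+1) + 3 * u0 (p+1) + u1 (p+1) := by
  simp only [c0, c1, c2, u0, u1, u2, Nat.add_sub_cancel]
  rw [Tp4]
  try push_cast
  try simp only [L25]
  try simp only [Nat.add_sub_cancel, W]
  try push_cast
  try ring_nf
  try simp only [chiP_m8, chiP_m7, chiP_m6, chiP_m5, chiP_m4, chiP_m3, chiP_m2, chiP_m1, chiP_0, chiP_1, chiP_2, chiP_3, chiP_4, chiP_5, chiP_6, chiP_7, chiP_8, chiP_9, chiP_10, chiP_11, chiP_z, chiQ_1, chiQ_2, chiQ_3, chiQ_4, chiQ_5, chiQ_6, chiQ_7, chiQ_8, chiQ_9, chiQ_10, chiQ_11]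
  try push_cast
  try ring_nf
  try reduce_mod_char
  try ring

lemma tc2_4 (p : ℕ) : c2 (5*(p+1)+4) = 10 * c0 (p+1) + 4 * c1 (p+1) + 8 * u0 (p+1) + 15 * u1 (p+1) + u2 (p+1) := by
  simp only [c0, c1, c2, u0, u1, u2, Nat.add_sub_cancel]
  rw [Tp4]
  try push_cast
  try simp only [L25]
  try simp only [Nat.add_sub_cancel, W]
  try push_cast
  try ring_nf
  try simp only [chiP_m8, chiP_m7, chiP_m6, chiP_m5, chiP_m4, chiP_m3, chiP_m2, chiP_m1, chiP_0, chiP_1, chiP_2, chiP_3, chiP_4, chiP_5, chiP_6, chiP_7, chiP_8, chiP_9, chiP_10, chiP_11, chiP_z, chiQ_1, chiQ_2, chiQ_3, chiQ_4, chiQ_5, chiQ_6, chiQ_7, chiQ_8, chiQ_9, chiQ_10, chiQ_11]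
  try push_cast
  try ring_nf
  try reduce_mod_char
  try ring

lemma tu0_0 (p : ℕ) : u0 (5*(p+1)+0) = 0 := by
  simp only [u0, u1, u2]
  rw [show (5*(p+1)+0) - 1 = 5*p+4 from by omega]
  rw [show (5 * ((5*(p+1)+0 : ℕ) : ℤ) * T (5*p+4) (((5*(p+1)+0 : ℕ) : ℤ)-1)) = 5 * (((5*(p+1)+0 : ℕ) : ℤ) * T (5*p+4) (((5*(p+1)+0 : ℕ) : ℤ)-1)) from by ring]
  rw [key5 (((5*(p+1)+0 : ℕ) : ℤ) * T (5*p+4) (((5*(p+1)+0 : ℕ) : ℤ)-1)) 0 (by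
    try push_cast
    try ring_nf
    try reduce_mod_char
    try ring)]
  norm_num

lemma tu1_0 (p : ℕ) : u1 (5*(p+1)+0) = 0 := by
  simp only [u0, u1, u2]
  rw [show (5*(p+1)+0) - 1 = 5*p+4 from by omega]
  rw [show (5 * ((5*(p+1)+0 : ℕ) : ℤ) * T (5*p+4) (((5*(p+1)+0 : ℕ) : ℤ))) = 5 * (((5*(p+1)+0 : ℕ) : ℤ) * T (5*p+4) (((5*(p+1)+0 : ℕ) : ℤ))) from by ring]
  rw [key5 (((5*(p+1)+0 : ℕ) : ℤ) * T (5*p+4) (((5*(p+1)+0 : ℕ) : ℤ))) 0 (by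
    try push_cast
    try ring_nf
    try reduce_mod_char
    try ring)]
  norm_num

lemma tu2_0 (p : ℕ) : u2 (5*(p+1)+0) = 0 := by
  simp only [u0, u1, u2]
  rw [show (5*(p+1)+0) - 1 = 5*p+4 from by omega]
  rw [show (5 * ((5*(p+1)+0 : ℕ) : ℤ) * T (5*p+4) (((5*(p+1)+0 : ℕ) : ℤ)+1)) = 5 * (((5*(p+1)+0 : ℕ) : ℤ) * T (5*p+4) (((5*(p+1)+0 : ℕ) : ℤ)+1)) from by ring]
  rw [key5 (((5*(p+1)+0 : ℕ) : ℤ) * T (5*p+4) (((5*(p+1)+0 : ℕ) : ℤ)+1)) 0 (by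
    try push_cast
    try ring_nf
    try reduce_mod_char
    try ring)]
  norm_num

lemma tu0_1 (p : ℕ) : u0 (5*(p+1)+1) = 5 * c0 (p+1) := by
  simp only [u0, u1, u2]
  rw [show (5*(p+1)+1) - 1 = 5*(p+1)+0 from rfl]
  rw [show (5 * ((5*(p+1)+1 : ℕ) : ℤ) * T (5*(p+1)+0) (((5*(p+1)+1 : ℕ) : ℤ)-1)) = 5 * (((5*(p+1)+1 : ℕ) : ℤ) * T (5*(p+1)+0) (((5*(p+1)+1 : ℕ) : ℤ)-1)) from by ring]
  rw [key5 (((5*(p+1)+1 : ℕ) : ℤ) * T (5*(p+1)+0) (((5*(p+1)+1 : ℕ) : ℤ)-1)) (T (p+1) ((p+1 : ℕ) : ℤ)) (by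
    try push_cast
    try push_cast
    try simp only [Nat.add_zero]
    try simp only [L5]
    try ring_nf
    try simp only [chiP_m8, chiP_m7, chiP_m6, chiP_m5, chiP_m4, chiP_m3, chiP_m2, chiP_m1, chiP_0, chiP_1, chiP_2, chiP_3, chiP_4, chiP_5, chiP_6, chiP_7, chiP_8, chiP_9, chiP_10, chiP_11, chiP_z, chiQ_1, chiQ_2, chiQ_3, chiQ_4, chiQ_5, chiQ_6, chiQ_7, chiQ_8, chiQ_9, chiQ_10, chiQ_11]
    try push_cast
    try ring_nf
    try reduce_mod_char
    try ring)]
  try simp only [c0, c1, c2]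
  try push_cast
  try ring_nf
  try reduce_mod_char
  try ring

lemma tu1_1 (p : ℕ) : u1 (5*(p+1)+1) = 0 := by
  simp only [u0, u1, u2]
  rw [show (5*(p+1)+1) - 1 = 5*(p+1)+0 from rfl]
  rw [show (5 * ((5*(p+1)+1 : ℕ) : ℤ) * T (5*(p+1)+0) (((5*(p+1)+1 : ℕ) : ℤ))) = 5 * (((5*(p+1)+1 : ℕ) : ℤ) * T (5*(p+1)+0) (((5*(p+1)+1 : ℕ) : ℤ))) from by ring]
  rw [key5 (((5*(p+1)+1 : ℕ) : ℤ) * T (5*(p+1)+0) (((5*(p+1)+1 : ℕ) : ℤ))) (0) (by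
    try push_cast
    try push_cast
    try simp only [Nat.add_zero]
    try simp only [L5]
    try ring_nf
    try simp only [chiP_m8, chiP_m7, chiP_m6, chiP_m5, chiP_m4, chiP_m3, chiP_m2, chiP_m1, chiP_0, chiP_1, chiP_2, chiP_3, chiP_4, chiP_5, chiP_6, chiP_7, chiP_8, chiP_9, chiP_10, chiP_11, chiP_z, chiQ_1, chiQ_2, chiQ_3, chiQ_4, chiQ_5, chiQ_6, chiQ_7, chiQ_8, chiQ_9, chiQ_10, chiQ_11]
    try push_cast
    try ring_nf
    try reduce_mod_char
    try ring)]
  try simp only [c0, c1, c2]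
  try push_cast
  try ring_nf
  try reduce_mod_char
  try ring

lemma tu2_1 (p : ℕ) : u2 (5*(p+1)+1) = 0 := by
  simp only [u0, u1, u2]
  rw [show (5*(p+1)+1) - 1 = 5*(p+1)+0 from rfl]
  rw [show (5 * ((5*(p+1)+1 : ℕ) : ℤ) * T (5*(p+1)+0) (((5*(p+1)+1 : ℕ) : ℤ)+1)) = 5 * (((5*(p+1)+1 : ℕ) : ℤ) * T (5*(p+1)+0) (((5*(p+1)+1 : ℕ) : ℤ)+1)) from by ring]
  rw [key5 (((5*(p+1)+1 : ℕ) : ℤ) * T (5*(p+1)+0) (((5*(p+1)+1 : ℕ) : ℤ)+1)) (0) (by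
    try push_cast
    try push_cast
    try simp only [Nat.add_zero]
    try simp only [L5]
    try ring_nf
    try simp only [chiP_m8, chiP_m7, chiP_m6, chiP_m5, chiP_m4, chiP_m3, chiP_m2, chiP_m1, chiP_0, chiP_1, chiP_2, chiP_3, chiP_4, chiP_5, chiP_6, chiP_7, chiP_8, chiP_9, chiP_10, chiP_11, chiP_z, chiQ_1, chiQ_2, chiQ_3, chiQ_4, chiQ_5, chiQ_6, chiQ_7, chiQ_8, chiQ_9, chiQ_10, chiQ_11]
    try push_cast
    try ring_nf
    try reduce_mod_char
    try ring)]
  try simp only [c0, c1, c2]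
  try push_cast
  try ring_nf
  try reduce_mod_char
  try ring

lemma tu0_2 (p : ℕ) : u0 (5*(p+1)+2) = 10 * c0 (p+1) := by
  simp only [u0, u1, u2]
  rw [show (5*(p+1)+2) - 1 = 5*(p+1)+1 from rfl]
  rw [show (5 * ((5*(p+1)+2 : ℕ) : ℤ) * T (5*(p+1)+1) (((5*(p+1)+2 : ℕ) : ℤ)-1)) = 5 * (((5*(p+1)+2 : ℕ) : ℤ) * T (5*(p+1)+1) (((5*(p+1)+2 : ℕ) : ℤ)-1)) from by ring]
  rw [key5 (((5*(p+1)+2 : ℕ) : ℤ) * T (5*(p+1)+1) (((5*(p+1)+2 : ℕ) : ℤ)-1)) (2 * T (p+1) ((p+1 : ℕ) : ℤ)) (by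
    try push_cast
    rw [Tp1]
    try push_cast
    try simp only [Nat.add_zero]
    try simp only [L5]
    try ring_nf
    try simp only [chiP_m8, chiP_m7, chiP_m6, chiP_m5, chiP_m4, chiP_m3, chiP_m2, chiP_m1, chiP_0, chiP_1, chiP_2, chiP_3, chiP_4, chiP_5, chiP_6, chiP_7, chiP_8, chiP_9, chiP_10, chiP_11, chiP_z, chiQ_1, chiQ_2, chiQ_3, chiQ_4, chiQ_5, chiQ_6, chiQ_7, chiQ_8, chiQ_9, chiQ_10, chiQ_11]
    try push_cast
    try ring_nf
    try reduce_mod_char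
    try ring)]
  try simp only [c0, c1, c2]
  try push_cast
  try ring_nf
  try reduce_mod_char
  try ring

lemma tu1_2 (p : ℕ) : u1 (5*(p+1)+2) = 10 * c0 (p+1) := by
  simp only [u0, u1, u2]
  rw [show (5*(p+1)+2) - 1 = 5*(p+1)+1 from rfl]
  rw [show (5 * ((5*(p+1)+2 : ℕ) : ℤ) * T (5*(p+1)+1) (((5*(p+1)+2 : ℕ) : ℤ))) = 5 * (((5*(p+1)+2 : ℕ) : ℤ) * T (5*(p+1)+1) (((5*(p+1)+2 : ℕ) : ℤ))) from by ring]
  rw [key5 (((5*(p+1)+2 : ℕ) : ℤ) * T (5*(p+1)+1) (((5*(p+1)+2 : ℕ) : ℤ))) (2 * T (p+1) ((p+1 : ℕ) : ℤ)) (by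
    try push_cast
    rw [Tp1]
    try push_cast
    try simp only [Nat.add_zero]
    try simp only [L5]
    try ring_nf
    try simp only [chiP_m8, chiP_m7, chiP_m6, chiP_m5, chiP_m4, chiP_m3, chiP_m2, chiP_m1, chiP_0, chiP_1, chiP_2, chiP_3, chiP_4, chiP_5, chiP_6, chiP_7, chiP_8, chiP_9, chiP_10, chiP_11, chiP_z, chiQ_1, chiQ_2, chiQ_3, chiQ_4, chiQ_5, chiQ_6, chiQ_7, chiQ_8, chiQ_9, chiQ_10, chiQ_11]
    try push_cast
    try ring_nf
    try reduce_mod_char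
    try ring)]
  try simp only [c0, c1, c2]
  try push_cast
  try ring_nf
  try reduce_mod_char
  try ring

lemma tu2_2 (p : ℕ) : u2 (5*(p+1)+2) = 0 := by
  simp only [u0, u1, u2]
  rw [show (5*(p+1)+2) - 1 = 5*(p+1)+1 from rfl]
  rw [show (5 * ((5*(p+1)+2 : ℕ) : ℤ) * T (5*(p+1)+1) (((5*(p+1)+2 : ℕ) : ℤ)+1)) = 5 * (((5*(p+1)+2 : ℕ) : ℤ) * T (5*(p+1)+1) (((5*(p+1)+2 : ℕ) : ℤ)+1)) from by ring]
  rw [key5 (((5*(p+1)+2 : ℕ) : ℤ) * T (5*(p+1)+1) (((5*(p+1)+2 : ℕ) : ℤ)+1)) (0) (by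
    try push_cast
    rw [Tp1]
    try push_cast
    try simp only [Nat.add_zero]
    try simp only [L5]
    try ring_nf
    try simp only [chiP_m8, chiP_m7, chiP_m6, chiP_m5, chiP_m4, chiP_m3, chiP_m2, chiP_m1, chiP_0, chiP_1, chiP_2, chiP_3, chiP_4, chiP_5, chiP_6, chiP_7, chiP_8, chiP_9, chiP_10, chiP_11, chiP_z, chiQ_1, chiQ_2, chiQ_3, chiQ_4, chiQ_5, chiQ_6, chiQ_7, chiQ_8, chiQ_9, chiQ_10, chiQ_11]
    try push_cast
    try ring_nf
    try reduce_mod_char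
    try ring)]
  try simp only [c0, c1, c2]
  try push_cast
  try ring_nf
  try reduce_mod_char
  try ring

lemma tu0_3 (p : ℕ) : u0 (5*(p+1)+3) = 20 * c0 (p+1) := by
  simp only [u0, u1, u2]
  rw [show (5*(p+1)+3) - 1 = 5*(p+1)+2 from rfl]
  rw [show (5 * ((5*(p+1)+3 : ℕ) : ℤ) * T (5*(p+1)+2) (((5*(p+1)+3 : ℕ) : ℤ)-1)) = 5 * (((5*(p+1)+3 : ℕ) : ℤ) * T (5*(p+1)+2) (((5*(p+1)+3 : ℕ) : ℤ)-1)) from by ring]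
  rw [key5 (((5*(p+1)+3 : ℕ) : ℤ) * T (5*(p+1)+2) (((5*(p+1)+3 : ℕ) : ℤ)-1)) (9 * T (p+1) ((p+1 : ℕ) : ℤ)) (by
    try push_cast
    rw [Tp2]
    try push_cast
    try simp only [Nat.add_zero]
    try simp only [L5]
    try ring_nf
    try simp only [chiP_m8, chiP_m7, chiP_m6, chiP_m5, chiP_m4, chiP_m3, chiP_m2, chiP_m1, chiP_0, chiP_1, chiP_2, chiP_3, chiP_4, chiP_5, chiP_6, chiP_7, chiP_8, chiP_9, chiP_10, chiP_11, chiP_z, chiQ_1, chiQ_2, chiQ_3, chiQ_4, chiQ_5, chiQ_6, chiQ_7, chiQ_8, chiQ_9, chiQ_10, chiQ_11]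
    try push_cast
    try ring_nf
    try reduce_mod_char
    try ring)]
  try simp only [c0, c1, c2]
  try push_cast
  try ring_nf
  try reduce_mod_char
  try ring

lemma tu1_3 (p : ℕ) : u1 (5*(p+1)+3) = 5 * c0 (p+1) := by
  simp only [u0, u1, u2]
  rw [show (5*(p+1)+3) - 1 = 5*(p+1)+2 from rfl]
  rw [show (5 * ((5*(p+1)+3 : ℕ) : ℤ) * T (5*(p+1)+2) (((5*(p+1)+3 : ℕ) : ℤ))) = 5 * (((5*(p+1)+3 : ℕ) : ℤ) * T (5*(p+1)+2) (((5*(p+1)+3 : ℕ) : ℤ))) from by ring]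
  rw [key5 (((5*(p+1)+3 : ℕ) : ℤ) * T (5*(p+1)+2) (((5*(p+1)+3 : ℕ) : ℤ))) (6 * T (p+1) ((p+1 : ℕ) : ℤ)) (by
    try push_cast
    rw [Tp2]
    try push_cast
    try simp only [Nat.add_zero]
    try simp only [L5]
    try ring_nf
    try simp only [chiP_m8, chiP_m7, chiP_m6, chiP_m5, chiP_m4, chiP_m3, chiP_m2, chiP_m1, chiP_0, chiP_1, chiP_2, chiP_3, chiP_4, chiP_5, chiP_6, chiP_7, chiP_8, chiP_9, chiP_10, chiP_11, chiP_z, chiQ_1, chiQ_2, chiQ_3, chiQ_4, chiQ_5, chiQ_6, chiQ_7, chiQ_8, chiQ_9, chiQ_10, chiQ_11]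
    try push_cast
    try ring_nf
    try reduce_mod_char
    try ring)]
  try simp only [c0, c1, c2]
  try push_cast
  try ring_nf
  try reduce_mod_char
  try ring

lemma tu2_3 (p : ℕ) : u2 (5*(p+1)+3) = 15 * c0 (p+1) := by
  simp only [u0, u1, u2]
  rw [show (5*(p+1)+3) - 1 = 5*(p+1)+2 from rfl]
  rw [show (5 * ((5*(p+1)+3 : ℕ) : ℤ) * T (5*(p+1)+2) (((5*(p+1)+3 : ℕ) : ℤ)+1)) = 5 * (((5*(p+1)+3 : ℕ) : ℤ) * T (5*(p+1)+2) (((5*(p+1)+3 : ℕ) : ℤ)+1)) from by ring]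
  rw [key5 (((5*(p+1)+3 : ℕ) : ℤ) * T (5*(p+1)+2) (((5*(p+1)+3 : ℕ) : ℤ)+1)) (3 * T (p+1) ((p+1 : ℕ) : ℤ)) (by
    try push_cast
    rw [Tp2]
    try push_cast
    try simp only [Nat.add_zero]
    try simp only [L5]
    try ring_nf
    try simp only [chiP_m8, chiP_m7, chiP_m6, chiP_m5, chiP_m4, chiP_m3, chiP_m2, chiP_m1, chiP_0, chiP_1, chiP_2, chiP_3, chiP_4, chiP_5, chiP_6, chiP_7, chiP_8, chiP_9, chiP_10, chiP_11, chiP_z, chiQ_1, chiQ_2, chiQ_3, chiQ_4, chiQ_5, chiQ_6, chiQ_7, chiQ_8, chiQ_9, chiQ_10, chiQ_11]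
    try push_cast
    try ring_nf
    try reduce_mod_char
    try ring)]
  try simp only [c0, c1, c2]
  try push_cast
  try ring_nf
  try reduce_mod_char
  try ring

lemma tu0_4 (p : ℕ) : u0 (5*(p+1)+4) = 15 * c0 (p+1) := by
  simp only [u0, u1, u2]
  rw [show (5*(p+1)+4) - 1 = 5*(p+1)+3 from rfl]
  rw [show (5 * ((5*(p+1)+4 : ℕ) : ℤ) * T (5*(p+1)+3) (((5*(p+1)+4 : ℕ) : ℤ)-1)) = 5 * (((5*(p+1)+4 : ℕ) : ℤ) * T (5*(p+1)+3) (((5*(p+1)+4 : ℕ) : ℤ)-1)) from by ring]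
  rw [key5 (((5*(p+1)+4 : ℕ) : ℤ) * T (5*(p+1)+3) (((5*(p+1)+4 : ℕ) : ℤ)-1)) (28 * T (p+1) ((p+1 : ℕ) : ℤ)) (by
    try push_cast
    rw [Tp3]
    try push_cast
    try simp only [Nat.add_zero]
    try simp only [L5]
    try ring_nf
    try simp only [chiP_m8, chiP_m7, chiP_m6, chiP_m5, chiP_m4, chiP_m3, chiP_m2, chiP_m1, chiP_0, chiP_1, chiP_2, chiP_3, chiP_4, chiP_5, chiP_6, chiP_7, chiP_8, chiP_9, chiP_10, chiP_11, chiP_z, chiQ_1, chiQ_2, chiQ_3, chiQ_4, chiQ_5, chiQ_6, chiQ_7, chiQ_8, chiQ_9, chiQ_10, chiQ_11]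
    try push_cast
    try ring_nf
    try reduce_mod_char
    try ring)]
  try simp only [c0, c1, c2]
  try push_cast
  try ring_nf
  try reduce_mod_char
  try ring

lemma tu1_4 (p : ℕ) : u1 (5*(p+1)+4) = 20 * c0 (p+1) := by
  simp only [u0, u1, u2]
  rw [show (5*(p+1)+4) - 1 = 5*(p+1)+3 from rfl]
  rw [show (5 * ((5*(p+1)+4 : ℕ) : ℤ) * T (5*(p+1)+3) (((5*(p+1)+4 : ℕ) : ℤ))) = 5 * (((5*(p+1)+4 : ℕ) : ℤ) * T (5*(p+1)+3) (((5*(p+1)+4 : ℕ) : ℤ))) from by ring]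
  rw [key5 (((5*(p+1)+4 : ℕ) : ℤ) * T (5*(p+1)+3) (((5*(p+1)+4 : ℕ) : ℤ))) (24 * T (p+1) ((p+1 : ℕ) : ℤ)) (by
    try push_cast
    rw [Tp3]
    try push_cast
    try simp only [Nat.add_zero]
    try simp only [L5]
    try ring_nf
    try simp only [chiP_m8, chiP_m7, chiP_m6, chiP_m5, chiP_m4, chiP_m3, chiP_m2, chiP_m1, chiP_0, chiP_1, chiP_2, chiP_3, chiP_4, chiP_5, chiP_6, chiP_7, chiP_8, chiP_9, chiP_10, chiP_11, chiP_z, chiQ_1, chiQ_2, chiQ_3, chiQ_4, chiQ_5, chiQ_6, chiQ_7, chiQ_8, chiQ_9, chiQ_10, chiQ_11]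
    try push_cast
    try ring_nf
    try reduce_mod_char
    try ring)]
  try simp only [c0, c1, c2]
  try push_cast
  try ring_nf
  try reduce_mod_char
  try ring

lemma tu2_4 (p : ℕ) : u2 (5*(p+1)+4) = 10 * c0 (p+1) + 20 * c1 (p+1) := by
  simp only [u0, u1, u2]
  rw [show (5*(p+1)+4) - 1 = 5*(p+1)+3 from rfl]
  rw [show (5 * ((5*(p+1)+4 : ℕ) : ℤ) * T (5*(p+1)+3) (((5*(p+1)+4 : ℕ) : ℤ)+1)) = 5 * (((5*(p+1)+4 : ℕ) : ℤ) * T (5*(p+1)+3) (((5*(p+1)+4 : ℕ) : ℤ)+1)) from by ring]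
  rw [key5 (((5*(p+1)+4 : ℕ) : ℤ) * T (5*(p+1)+3) (((5*(p+1)+4 : ℕ) : ℤ)+1)) (4 * T (p+1) (((p+1 : ℕ) : ℤ) + 1) + 12 * T (p+1) ((p+1 : ℕ) : ℤ)) (by
    try push_cast
    rw [Tp3]
    try push_cast
    try simp only [Nat.add_zero]
    try simp only [L5]
    try ring_nf
    try simp only [chiP_m8, chiP_m7, chiP_m6, chiP_m5, chiP_m4, chiP_m3, chiP_m2, chiP_m1, chiP_0, chiP_1, chiP_2, chiP_3, chiP_4, chiP_5, chiP_6, chiP_7, chiP_8, chiP_9, chiP_10, chiP_11, chiP_z, chiQ_1, chiQ_2, chiQ_3, chiQ_4, chiQ_5, chiQ_6, chiQ_7, chiQ_8, chiQ_9, chiQ_10, chiQ_11]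
    try push_cast
    try ring_nf
    try reduce_mod_char
    try ring)]
  try simp only [c0, c1, c2]
  try push_cast
  try ring_nf
  try reduce_mod_char
  try ring

abbrev SState := (ZMod 25) × (ZMod 25) × (ZMod 25) × (ZMod 25) × (ZMod 25) × (ZMod 25)

def tr0 : SState → SState := fun x => match x with
  | (a,b,c,d,e,f) => (a + 10*d, 9*d + e, 6*d + 3*e, 0, 0, 0)

def tr1 : SState → SState := fun x => match x with
  | (a,b,c,d,e,f) => (a + 3*d + 2*e, a + 4*e, 18*d + 10*e, 5*a, 0, 0)

def tr2 : SState → SState := fun x => match x with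
  | (a,b,c,d,e,f) => (3*a + 3*d + 10*e, 2*a + 21*d + 16*e, a + 3*d + 7*e, 10*a, 10*a, 0)

def tr3 : SState → SState := fun x => match x with
  | (a,b,c,d,e,f) => (7*a + 20*d + 17*e, 6*a + 2*d + 8*e, 3*a + b + 6*d + e, 20*a, 5*a, 15*a)

def tr4 : SState → SState := fun x => match x with
  | (a,b,c,d,e,f) => (19*a + 24*d + 8*e, 16*a + b + 3*d + e, 10*a + 4*b + 8*d + 15*e + f, 15*a, 20*a, 10*a + 20*b)


def sfun (n : ℕ) : SState := (c0 n, c1 n, c2 n, u0 n, u1 n, u2 n)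

lemma step0 (p : ℕ) : sfun (5*(p+1)+0) = tr0 (sfun (p+1)) := by
  simp only [sfun, tr0]
  rw [tc0_0 p, tc1_0 p, tc2_0 p, tu0_0 p, tu1_0 p, tu2_0 p]

lemma step1 (p : ℕ) : sfun (5*(p+1)+1) = tr1 (sfun (p+1)) := by
  simp only [sfun, tr1]
  rw [tc0_1 p, tc1_1 p, tc2_1 p, tu0_1 p, tu1_1 p, tu2_1 p]

lemma step2 (p : ℕ) : sfun (5*(p+1)+2) = tr2 (sfun (p+1)) := by
  simp only [sfun, tr2]
  rw [tc0_2 p, tc1_2 p, tc2_2 p, tu0_2 p, tu1_2 p, tu2_2 p]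

lemma step3 (p : ℕ) : sfun (5*(p+1)+3) = tr3 (sfun (p+1)) := by
  simp only [sfun, tr3]
  rw [tc0_3 p, tc1_3 p, tc2_3 p, tu0_3 p, tu1_3 p, tu2_3 p]

lemma step4 (p : ℕ) : sfun (5*(p+1)+4) = tr4 (sfun (p+1)) := by
  simp only [sfun, tr4]
  rw [tc0_4 p, tc1_4 p, tc2_4 p, tu0_4 p, tu1_4 p, tu2_4 p]


def enc : SState → ℕ := fun x => match x with
  | (a,b,c,d,e,f) => a.val + 25*(b.val + 25*(c.val + 25*(d.val + 25*(e.val + 25*f.val))))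

def dec : ℕ → SState := fun k =>
  (((k % 25 : ℕ) : ZMod 25), ((k/25 % 25 : ℕ) : ZMod 25), ((k/625 % 25 : ℕ) : ZMod 25),
   ((k/15625 % 25 : ℕ) : ZMod 25), ((k/390625 % 25 : ℕ) : ZMod 25), ((k/9765625 % 25 : ℕ) : ZMod 25))

lemma dec_enc (x : SState) : dec (enc x) = x := by
  obtain ⟨a,b,c,d,e,f⟩ := x
  have ha := ZMod.val_lt a
  have hb := ZMod.val_lt b
  have hc := ZMod.val_lt c
  have hd := ZMod.val_lt d
  have he := ZMod.val_lt e
  have hf := ZMod.val_lt f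
  simp only [enc, dec]
  rw [show (a.val + 25*(b.val + 25*(c.val + 25*(d.val + 25*(e.val + 25*f.val))))) % 25 = a.val by omega,
      show (a.val + 25*(b.val + 25*(c.val + 25*(d.val + 25*(e.val + 25*f.val))))) / 25 % 25 = b.val by omega,
      show (a.val + 25*(b.val + 25*(c.val + 25*(d.val + 25*(e.val + 25*f.val))))) / 625 % 25 = c.val by omega,
      show (a.val + 25*(b.val + 25*(c.val + 25*(d.val + 25*(e.val + 25*f.val))))) / 15625 % 25 = d.val by omega,
      show (a.val + 25*(b.val + 25*(c.val + 25*(d.val + 25*(e.val + 25*f.val))))) / 390625 % 25 = e.val by omega,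
      show (a.val + 25*(b.val + 25*(c.val + 25*(d.val + 25*(e.val + 25*f.val))))) / 9765625 % 25 = f.val by omega]
  rw [ZMod.natCast_rightInverse a, ZMod.natCast_rightInverse b, ZMod.natCast_rightInverse c,
      ZMod.natCast_rightInverse d, ZMod.natCast_rightInverse e, ZMod.natCast_rightInverse f]

inductive NT | nil | nd (l : NT) (k : ℕ) (r : NT)

def NT.mem : NT → ℕ → Bool
  | .nil, _ => false
  | .nd l k r, x => if x = k then true else if x < k then l.mem x else r.mem x

def NT.lst : NT → List ℕ
  | .nil => []
  | .nd l k r => l.lst ++ k :: r.lst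

lemma NT.mem_lst : ∀ (t : NT) (x : ℕ), t.mem x = true → x ∈ t.lst := by
  intro t
  induction t with
  | nil => intro x h; simp [NT.mem] at h
  | nd l k r ihl ihr =>
    intro x h
    simp only [NT.mem] at h
    simp only [NT.lst, List.mem_append, List.mem_cons]
    split_ifs at h with h1 h2
    · exact Or.inr (Or.inl h1)
    · exact Or.inl (ihl x h)
    · exact Or.inr (Or.inr (ihr x h))

def tree : NT := (.nd (.nd (.nd (.nd (.nd (.nd (.nd (.nd (.nd (.nd (.nd .nil 1 .nil) 2 .nil) 3 (.nd (.nd .nil 4 .nil) 6 .nil)) 7 (.nd (.nd (.nd .nil 8 .nil) 9 .nil) 11 (.nd .nil 12 .nil))) 13 (.nd (.nd (.nd (.nd .nil 14 .nil) 16 .nil) 17 (.nd .nil 18 .nil)) 19 (.nd (.nd (.nd .nil 21 .nil) 22 .nil) 23 (.nd .nil 24 .nil)))) 129 (.nd (.nd (.nd (.nd (.nd .nil 134 .nil) 139 .nil) 144 (.nd .nil 149 .nil)) 253 (.nd (.nd (.nd .nil 258 .nil) 263 .nil) 268 (.nd .nil 273 .nil))) 377 (.nd (.nd (.nd (.nd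 .nil 382 .nil) 387 .nil) 392 (.nd .nil 397 .nil)) 501 (.nd (.nd (.nd .nil 506 .nil) 511 .nil) 516 (.nd .nil 521 .nil))))) 3126 (.nd (.nd (.nd (.nd (.nd (.nd .nil 3131 .nil) 3136 .nil) 3141 (.nd (.nd .nil 3146 .nil) 3251 .nil)) 3256 (.nd (.nd (.nd .nil 3261 .nil) 3266 .nil) 3271 (.nd .nil 3626 .nil))) 3631 (.nd (.nd (.nd (.nd .nil 3636 .nil) 3641 .nil) 3646 (.nd .nil 6252 .nil)) 6257 (.nd (.nd (.nd .nil 6262 .nil) 6267 .nil) 6272 (.nd .nil 6502 .nil)))) 6507 (.nd (.nd (.nd (.nd (.nd .nil 6512 .nil) 6517 .nil) 6522 (.nd .nil 6627 .nil)) 6632 (.nd (.nd (.nd .nil 6637 .nil) 6642 .nil) 6647 (.nd .nil 9378 .nil))) 9383 (.nd (.nd (.nd (.nd .nil 9388 .nil) 9393 .nil) 9398 (.nd .nil 9628 .nil)) 9633 (.nd (.nd (.nd .nil 9638 .nil) 9643 .nil) 9648 (.nd .nil 9753 .nil)))))) 9758 (.nd (.nd (.nd (.nd (.nd (.nd (.nd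 .nil 9763 .nil) 9768 .nil) 9773 (.nd (.nd .nil 12504 .nil) 12509 .nil)) 12514 (.nd (.nd (.nd .nil 12519 .nil) 12524 .nil) 12629 (.nd .nil 12634 .nil))) 12639 (.nd (.nd (.nd (.nd .nil 12644 .nil) 12649 .nil) 13004 (.nd .nil 13009 .nil)) 13014 (.nd (.nd (.nd .nil 13019 .nil) 13024 .nil) 78151 (.nd .nil 78281 .nil)))) 78411 (.nd (.nd (.nd (.nd (.nd .nil 78541 .nil) 78671 .nil) 81276 (.nd .nil 81296 .nil)) 81401 (.nd (.nd (.nd .nil 81406 .nil) 81531 .nil) 81536 (.nd .nil 81661 .nil))) 81666 (.nd (.nd (.nd (.nd .nil 81791 .nil) 81796 .nil) 84421 (.nd .nil 84526 .nil)) 84656 (.nd (.nd (.nd .nil 84786 .nil) 84916 .nil) 87541 (.nd .nil 87671 .nil))))) 87776 (.nd (.nd (.nd (.nd (.nd (.nd .nil 87906 .nil) 88036 .nil) 156302 (.nd .nil 156432 .nil)) 156562 (.nd (.nd (.nd .nil 156692 .nil) 156822 .nil) 159432 (.nd .nil 159562 .nil))) 159692 (.nd (.nd (.nd (.nd .nil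 159822 .nil) 159927 .nil) 162552 (.nd .nil 162567 .nil)) 162682 (.nd (.nd (.nd .nil 162697 .nil) 162802 .nil) 162812 (.nd .nil 162932 .nil)))) 162942 (.nd (.nd (.nd (.nd (.nd .nil 163062 .nil) 163072 .nil) 168817 (.nd .nil 168947 .nil)) 169052 (.nd (.nd (.nd .nil 169182 .nil) 169312 .nil) 234453 (.nd .nil 234583 .nil))) 234713 (.nd (.nd (.nd (.nd .nil 234843 .nil) 234973 .nil) 237588 (.nd .nil 237718 .nil)) 237848 (.nd (.nd (.nd .nil 237953 .nil) 238083 .nil) 243828 (.nd .nil 243838 .nil))))))) 243958 (.nd (.nd (.nd (.nd (.nd (.nd (.nd (.nd .nil 243968 .nil) 244088 .nil) 244098 (.nd (.nd .nil 244203 .nil) 244218 .nil)) 244333 (.nd (.nd (.nd .nil 244348 .nil) 246973 .nil) 247078 (.nd .nil 247208 .nil))) 247338 (.nd (.nd (.nd (.nd .nil 247468 .nil) 312604 .nil) 312734 (.nd .nil 312864 .nil)) 312994 (.nd (.nd (.nd .nil 313124 .nil) 318864 .nil) 318994 (.nd .nil 319124 .nil)))) 319229 (.nd (.nd (.nd (.nd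 (.nd .nil 319359 .nil) 321984 .nil) 322114 (.nd .nil 322244 .nil)) 322374 (.nd (.nd (.nd .nil 322479 .nil) 325104 .nil) 325109 (.nd .nil 325234 .nil))) 325239 (.nd (.nd (.nd (.nd .nil 325364 .nil) 325369 .nil) 325494 (.nd .nil 325499 .nil)) 325604 (.nd (.nd (.nd .nil 325624 .nil) 2033164 .nil) 2033284 (.nd .nil 2033294 .nil))))) 2033414 (.nd (.nd (.nd (.nd (.nd (.nd .nil 2033659 .nil) 2036424 .nil) 2036529 (.nd (.nd .nil 2036659 .nil) 2036674 .nil)) 2036779 (.nd (.nd (.nd .nil 2039414 .nil) 2039424 .nil) 2039544 (.nd .nil 2039789 .nil))) 2039919 (.nd (.nd (.nd (.nd .nil 2042529 .nil) 2042659 .nil) 2042779 (.nd .nil 2042789 .nil)) 2042909 (.nd (.nd (.nd .nil 2045674 .nil) 2045919 .nil) 2046049 (.nd .nil 2046154 .nil)))) 2046169 (.nd (.nd (.nd (.nd (.nd .nil 4063178 .nil) 4063198 .nil) 4063303 (.nd .nil 4063438 .nil)) 4063563 (.nd (.nd (.nd .nil 4066303 .nil) 4066563 .nil) 4066568 (.nd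 .nil 4066693 .nil))) 4066803 (.nd (.nd (.nd (.nd .nil 4069433 .nil) 4069568 .nil) 4069693 (.nd .nil 4069928 .nil)) 4069933 (.nd (.nd (.nd .nil 4072693 .nil) 4072698 .nil) 4072823 (.nd .nil 4072933 .nil)))))) 4073058 (.nd (.nd (.nd (.nd (.nd (.nd (.nd .nil 4075698 .nil) 4075823 .nil) 4076058 (.nd (.nd .nil 4076063 .nil) 4076188 .nil)) 6096337 (.nd (.nd (.nd .nil 6096462 .nil) 6096467 .nil) 6096702 (.nd .nil 6096827 .nil))) 6099467 (.nd (.nd (.nd (.nd .nil 6099592 .nil) 6099702 .nil) 6099827 (.nd .nil 6099832 .nil)) 6102592 (.nd (.nd (.nd .nil 6102597 .nil) 6102832 .nil) 6102957 (.nd .nil 6103092 .nil)))) 6105722 (.nd (.nd (.nd (.nd (.nd .nil 6105832 .nil) 6105957 .nil) 6105962 (.nd .nil 6106222 .nil)) 6108962 (.nd (.nd (.nd .nil 6109087 .nil) 6109222 .nil) 6109327 (.nd .nil 6109347 .nil))) 8126356 (.nd (.nd (.nd (.nd .nil 8126371 .nil) 8126476 .nil) 8126606 (.nd .nil 8126851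 .nil)) 8129616 (.nd (.nd (.nd .nil 8129736 .nil) 8129746 .nil) 8129866 (.nd .nil 8129996 .nil))))) 8132606 (.nd (.nd (.nd (.nd (.nd (.nd .nil 8132736 .nil) 8132981 .nil) 8133101 (.nd .nil 8133111 .nil)) 8135746 (.nd (.nd (.nd .nil 8135851 .nil) 8135866 .nil) 8135996 (.nd .nil 8136101 .nil))) 8138866 (.nd (.nd (.nd (.nd .nil 8139111 .nil) 8139231 .nil) 8139241 (.nd .nil 8139361 .nil)) 50939406 (.nd (.nd (.nd .nil 50939421 .nil) 50939526 .nil) 50939541 (.nd .nil 50939781 .nil)))) 50939901 (.nd (.nd (.nd (.nd (.nd .nil 50939911 .nil) 50942541 .nil) 50942661 (.nd .nil 50942671 .nil)) 50942781 (.nd (.nd (.nd .nil 50942791 .nil) 50942901 .nil) 50942911 (.nd .nil 50945661 .nil))) 50945671 (.nd (.nd (.nd (.nd .nil 50945901 .nil) 50946031 .nil) 50946046 (.nd .nil 50946151 .nil)) 50946166 (.nd (.nd (.nd .nil 50948781 .nil) 50948791 .nil) 50948901 (.nd .nil 50948911 .nil)))))))) 50949031 (.nd (.nd (.nd (.nd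 (.nd (.nd (.nd (.nd (.nd .nil 50949046 .nil) 50949286 .nil) 50952046 (.nd (.nd .nil 50952151 .nil) 50952166 .nil)) 50952286 (.nd (.nd (.nd .nil 50952296 .nil) 50952406 .nil) 50952416 (.nd .nil 52969444 .nil))) 52969449 (.nd (.nd (.nd (.nd .nil 52969554 .nil) 52969559 .nil) 52969804 (.nd .nil 52969934 .nil)) 52969939 (.nd (.nd (.nd .nil 52970184 .nil) 52970314 .nil) 52970319 (.nd .nil 52970429 .nil)))) 52970449 (.nd (.nd (.nd (.nd (.nd .nil 52970559 .nil) 52970564 .nil) 52970699 (.nd .nil 52970809 .nil)) 52970814 (.nd (.nd (.nd .nil 52970944 .nil) 52971059 .nil) 52971189 (.nd .nil 52971194 .nil))) 52971324 (.nd (.nd (.nd (.nd .nil 52971434 .nil) 52971569 .nil) 52971814 (.nd .nil 52972574 .nil)) 52972679 (.nd (.nd (.nd .nil 52972684 .nil) 52972814 .nil) 52972819 (.nd .nil 52972929 .nil))))) 52972949 (.nd (.nd (.nd (.nd (.nd (.nd .nil 52973194 .nil) 52973199 .nil) 52973444 (.nd (.nd .nil 52973554 .nil) 52973574 .nil)) 52973684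 (.nd (.nd (.nd .nil 52973689 .nil) 52973804 .nil) 52973824 (.nd .nil 52973934 .nil))) 52974074 (.nd (.nd (.nd (.nd .nil 52974179 .nil) 52974184 .nil) 52974314 (.nd .nil 52974449 .nil)) 52974694 (.nd (.nd (.nd .nil 52974804 .nil) 52974939 .nil) 52975694 (.nd .nil 52975699 .nil)))) 52975944 (.nd (.nd (.nd (.nd (.nd .nil 52976054 .nil) 52976074 .nil) 52976184 (.nd .nil 52976189 .nil)) 52976319 (.nd (.nd (.nd .nil 52976324 .nil) 52976429 .nil) 52976434 (.nd .nil 52976679 .nil))) 52976809 (.nd (.nd (.nd (.nd .nil 52976814 .nil) 52976949 .nil) 52977064 (.nd .nil 52977194 .nil)) 52977199 (.nd (.nd (.nd .nil 52977304 .nil) 52977439 .nil) 52977444 (.nd .nil 52977574 .nil)))))) 52977684 (.nd (.nd (.nd (.nd (.nd (.nd (.nd .nil 52977819 .nil) 52977929 .nil) 52978819 (.nd (.nd .nil 52978824 .nil) 52978929 .nil)) 52978934 (.nd (.nd (.nd .nil 52979064 .nil) 52979069 .nil) 52979314 (.nd .nil 52979444 .nil))) 52979449 (.nd (.nd (.nd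 (.nd .nil 52979554 .nil) 52979559 .nil) 52979689 (.nd .nil 52979694 .nil)) 52979939 (.nd (.nd (.nd .nil 52980054 .nil) 52980184 .nil) 52980189 (.nd .nil 52980319 .nil)))) 52980429 (.nd (.nd (.nd (.nd (.nd .nil 52980434 .nil) 52980564 .nil) 52980699 (.nd .nil 52980809 .nil)) 52981054 (.nd (.nd (.nd .nil 52981189 .nil) 52982059 .nil) 52982189 (.nd .nil 52982194 .nil))) 52982304 (.nd (.nd (.nd (.nd .nil 52982324 .nil) 52982434 .nil) 52982439 (.nd .nil 52982574 .nil)) 52982679 (.nd (.nd (.nd .nil 52982684 .nil) 52982814 .nil) 52982819 (.nd .nil 52982929 .nil))))) 52982949 (.nd (.nd (.nd (.nd (.nd (.nd .nil 52983179 .nil) 52983199 .nil) 52983309 (.nd .nil 52983444 .nil)) 52983449 (.nd (.nd (.nd .nil 52983554 .nil) 52983694 .nil) 52983934 (.nd .nil 52984069 .nil))) 52984179 (.nd (.nd (.nd (.nd .nil 52984314 .nil) 53050077 .nil) 53050092 (.nd .nil 53050212 .nil)) 53050222 (.nd (.nd (.nd .nil 53050332 .nil) 53050342 .nil) 53050452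 (.nd .nil 53050462 .nil)))) 53050582 (.nd (.nd (.nd (.nd (.nd .nil 53050597 .nil) 53053212 .nil) 53053332 (.nd .nil 53053452 .nil)) 53053597 (.nd (.nd (.nd .nil 53053717 .nil) 53056332 .nil) 53056342 (.nd .nil 53056452 .nil))) 53056462 (.nd (.nd (.nd (.nd .nil 53056582 .nil) 53056597 .nil) 53056702 (.nd .nil 53056717 .nil)) 53056837 (.nd (.nd (.nd .nil 53056847 .nil) 53059452 .nil) 53059462 (.nd .nil 53059582 .nil))))))) 53059597 (.nd (.nd (.nd (.nd (.nd (.nd (.nd (.nd .nil 53059702 .nil) 53059717 .nil) 53059837 (.nd (.nd .nil 53059847 .nil) 53059957 .nil)) 53059967 (.nd (.nd (.nd .nil 54767008 .nil) 54767018 .nil) 54767128 (.nd .nil 54767138 .nil))) 54767258 (.nd (.nd (.nd (.nd .nil 54767273 .nil) 54767378 .nil) 54770128 (.nd .nil 54770138 .nil)) 54770258 (.nd (.nd (.nd .nil 54770273 .nil) 54770378 .nil) 54770393 (.nd .nil 54770523 .nil)))) 54773258 (.nd (.nd (.nd (.nd (.nd .nil 54773273 .nil) 54773378 .nil) 54773393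 (.nd .nil 54773513 .nil)) 54773523 (.nd (.nd (.nd .nil 54773643 .nil) 54776378 .nil) 54776393 (.nd .nil 54776513 .nil))) 54776523 (.nd (.nd (.nd (.nd .nil 54776633 .nil) 54776643 .nil) 54776763 (.nd .nil 54779513 .nil)) 54779523 (.nd (.nd (.nd .nil 54779633 .nil) 54779643 .nil) 54779753 (.nd .nil 54779763 .nil))))) 54779883 (.nd (.nd (.nd (.nd (.nd (.nd .nil 56877569 .nil) 56877689 .nil) 56877809 (.nd .nil 56878074 .nil)) 56880689 (.nd (.nd (.nd .nil 56880929 .nil) 56881074 .nil) 56881194 (.nd .nil 56883809 .nil))) 56883929 (.nd (.nd (.nd (.nd .nil 56884074 .nil) 56884194 .nil) 56886929 (.nd .nil 56887074 .nil)) 56887314 (.nd (.nd (.nd .nil 56887434 .nil) 56890194 .nil) 56890314 (.nd .nil 56890434 .nil)))) 56890554 (.nd (.nd (.nd (.nd (.nd .nil 99768266 .nil) 99768271 .nil) 99768386 (.nd .nil 99768391 .nil)) 99768506 (.nd (.nd (.nd .nil 99768626 .nil) 99768631 .nil) 99771386 (.nd .nil 99771391 .nil))) 99771506 (.nd (.nd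 (.nd (.nd .nil 99771511 .nil) 99771626 .nil) 99771751 (.nd .nil 99771771 .nil)) 99774506 (.nd (.nd (.nd .nil 99774511 .nil) 99774626 .nil) 99774631 (.nd .nil 99774771 .nil)))))) 99774891 (.nd (.nd (.nd (.nd (.nd (.nd (.nd .nil 99774896 .nil) 99777626 .nil) 99777631 (.nd (.nd .nil 99777751 .nil) 99777771 .nil)) 99777891 (.nd (.nd (.nd .nil 99778011 .nil) 99778016 .nil) 99780751 (.nd .nil 99780771 .nil))) 99780891 (.nd (.nd (.nd (.nd .nil 99780896 .nil) 99781011 .nil) 99781131 (.nd .nil 99781136 .nil)) 101875692 (.nd (.nd (.nd .nil 101875697 .nil) 101875812 .nil) 101875817 (.nd .nil 101876052 .nil)))) 101876057 (.nd (.nd (.nd (.nd (.nd .nil 101876177 .nil) 101878812 .nil) 101878817 (.nd .nil 101878937 .nil)) 101879052 (.nd (.nd (.nd .nil 101879057 .nil) 101879177 .nil) 101879197 (.nd .nil 101881932 .nil))) 101881937 (.nd (.nd (.nd (.nd .nil 101882177 .nil) 101882197 .nil) 101882322 (.nd .nil 101882437 .nil)) 101882442 (.nd (.nd (.nd .nil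 101885057 .nil) 101885177 .nil) 101885197 (.nd .nil 101885317 .nil))))) 101885322 (.nd (.nd (.nd (.nd (.nd (.nd .nil 101885557 .nil) 101885562 .nil) 101888317 (.nd .nil 101888322 .nil)) 101888442 (.nd (.nd (.nd .nil 101888557 .nil) 101888562 .nil) 101888677 (.nd .nil 101888682 .nil))) 103595743 (.nd (.nd (.nd (.nd .nil 103595863 .nil) 103595983 .nil) 103596248 (.nd .nil 103598863 .nil)) 103599103 (.nd (.nd (.nd .nil 103599248 .nil) 103599368 .nil) 103601983 (.nd .nil 103602103 .nil)))) 103602248 (.nd (.nd (.nd (.nd (.nd .nil 103602368 .nil) 103605103 .nil) 103605248 (.nd .nil 103605488 .nil)) 103605608 (.nd (.nd (.nd .nil 103608368 .nil) 103608488 .nil) 103608608 (.nd .nil 103608728 .nil))) 105547623 (.nd (.nd (.nd (.nd .nil 105547733 .nil) 105547853 .nil) 105547978 (.nd .nil 105547988 .nil)) 105548113 (.nd (.nd (.nd .nil 105548123 .nil) 105548238 .nil) 105548248 (.nd .nil 105548358 .nil))))))))) 105548483 (.nd (.nd (.nd (.nd (.nd (.nd (.nd (.nd (.nd (.nd .nil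 105548493 .nil) 105548603 .nil) 105548618 (.nd (.nd .nil 105548873 .nil) 105548983 .nil)) 105549118 (.nd (.nd (.nd .nil 105549363 .nil) 105549608 .nil) 105549623 (.nd .nil 105549743 .nil))) 105549853 (.nd (.nd (.nd (.nd .nil 105549868 .nil) 105549978 .nil) 105549988 (.nd .nil 105550748 .nil)) 105550868 (.nd (.nd (.nd .nil 105550978 .nil) 105550993 .nil) 105551103 (.nd .nil 105551113 .nil)))) 105551238 (.nd (.nd (.nd (.nd (.nd .nil 105551363 .nil) 105551373 .nil) 105551608 (.nd .nil 105551618 .nil)) 105551728 (.nd (.nd (.nd .nil 105551853 .nil) 105551863 .nil) 105551998 (.nd .nil 105552243 .nil))) 105552353 (.nd (.nd (.nd (.nd .nil 105552488 .nil) 105552613 .nil) 105552623 (.nd .nil 105552858 .nil)) 105552868 (.nd (.nd (.nd .nil 105552978 .nil) 105553103 .nil) 105553113 (.nd .nil 105553858 .nil))))) 105553983 (.nd (.nd (.nd (.nd (.nd (.nd .nil 105553993 .nil) 105554103 .nil) 105554118 (.nd (.nd .nil 105554228 .nil) 105554363 .nil)) 105554498 (.nd (.nd (.nd .nil 105554608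 .nil) 105554623 .nil) 105554733 (.nd .nil 105554743 .nil))) 105554978 (.nd (.nd (.nd (.nd .nil 105554988 .nil) 105555123 .nil) 105555233 (.nd .nil 105555368 .nil)) 105555478 (.nd (.nd (.nd .nil 105555738 .nil) 105555748 .nil) 105555858 (.nd .nil 105555873 .nil)))) 105556103 (.nd (.nd (.nd (.nd (.nd .nil 105556118 .nil) 105556238 .nil) 105556983 (.nd .nil 105556998 .nil)) 105557108 (.nd (.nd (.nd .nil 105557118 .nil) 105557243 .nil) 105557353 (.nd .nil 105557498 .nil))) 105557733 (.nd (.nd (.nd (.nd .nil 105557748 .nil) 105557868 .nil) 105557978 (.nd .nil 105557993 .nil)) 105558103 (.nd (.nd (.nd .nil 105558113 .nil) 105558248 .nil) 105558358 (.nd .nil 105558603 .nil)))))) 105558738 (.nd (.nd (.nd (.nd (.nd (.nd (.nd .nil 105558873 .nil) 105558983 .nil) 105558998 (.nd (.nd .nil 105559108 .nil) 105559118 .nil)) 105559353 (.nd (.nd (.nd .nil 105559363 .nil) 105560108 .nil) 105560123 (.nd .nil 105560233 .nil))) 105560368 (.nd (.nd (.nd (.nd .nil 105560488 .nil) 105560613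 .nil) 105560623 (.nd .nil 105560738 .nil)) 105560748 (.nd (.nd (.nd .nil 105560858 .nil) 105560873 .nil) 105561103 (.nd .nil 105561118 .nil)))) 105561238 (.nd (.nd (.nd (.nd (.nd .nil 105561483 .nil) 105561618 .nil) 105561728 (.nd .nil 105561863 .nil)) 105561988 (.nd (.nd (.nd .nil 105561998 .nil) 105562108 .nil) 105562233 (.nd .nil 105562243 .nil))) 105562353 (.nd (.nd (.nd (.nd .nil 105562368 .nil) 105706289 .nil) 105706294 (.nd .nil 105706409 .nil)) 105706414 (.nd (.nd (.nd .nil 105706529 .nil) 105706534 .nil) 105706654 (.nd .nil 105706674 .nil))))) 105706794 (.nd (.nd (.nd (.nd (.nd (.nd .nil 105706799 .nil) 105709409 .nil) 105709414 (.nd .nil 105709529 .nil)) 105709534 (.nd (.nd (.nd .nil 105709654 .nil) 105709674 .nil) 105709794 (.nd .nil 105709799 .nil))) 105709914 (.nd (.nd (.nd (.nd .nil 105709919 .nil) 105712529 .nil) 105712534 (.nd .nil 105712654 .nil)) 105712674 (.nd (.nd (.nd .nil 105712794 .nil) 105712799 .nil) 105712914 (.nd .nil 105712919 .nil)))) 105713034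 (.nd (.nd (.nd (.nd (.nd .nil 105713039 .nil) 105715654 .nil) 105715799 (.nd .nil 105715919 .nil)) 105716039 (.nd (.nd (.nd .nil 105716159 .nil) 148596991 .nil) 148597111 (.nd .nil 148597231 .nil))) 148597351 (.nd (.nd (.nd (.nd .nil 148597496 .nil) 148600111 .nil) 148600116 (.nd .nil 148600231 .nil)) 148600236 (.nd (.nd (.nd .nil 148600351 .nil) 148600356 .nil) 148600476 (.nd .nil 148600496 .nil))))))) 148600616 (.nd (.nd (.nd (.nd (.nd (.nd (.nd (.nd .nil 148600621 .nil) 148603231 .nil) 148603236 (.nd (.nd .nil 148603351 .nil) 148603356 .nil)) 148603476 (.nd (.nd (.nd .nil 148603496 .nil) 148603616 .nil) 148603621 (.nd .nil 148603736 .nil))) 148603741 (.nd (.nd (.nd (.nd .nil 148606351 .nil) 148606356 .nil) 148606476 (.nd .nil 148606496 .nil)) 148606616 (.nd (.nd (.nd .nil 148606621 .nil) 148606736 .nil) 148606741 (.nd .nil 148606856 .nil)))) 148606861 (.nd (.nd (.nd (.nd (.nd .nil 148750782 .nil) 148750797 .nil) 148750907 (.nd .nil 148750917 .nil)) 148751042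 (.nd (.nd (.nd .nil 148751152 .nil) 148751162 .nil) 148751287 (.nd .nil 148751422 .nil))) 148751532 (.nd (.nd (.nd (.nd .nil 148751667 .nil) 148751912 .nil) 148752032 (.nd .nil 148752047 .nil)) 148752277 (.nd (.nd (.nd .nil 148752292 .nil) 148752402 .nil) 148752412 (.nd .nil 148752527 .nil))))) 148752537 (.nd (.nd (.nd (.nd (.nd (.nd .nil 148752662 .nil) 148752782 .nil) 148752917 (.nd .nil 148753027 .nil)) 148753042 (.nd (.nd (.nd .nil 148753787 .nil) 148753797 .nil) 148754032 (.nd .nil 148754042 .nil))) 148754152 (.nd (.nd (.nd (.nd .nil 148754167 .nil) 148754277 .nil) 148754412 (.nd .nil 148754547 .nil)) 148754792 (.nd (.nd (.nd .nil 148754902 .nil) 148755037 .nil) 148755047 (.nd .nil 148755157 .nil)))) 148755172 (.nd (.nd (.nd (.nd (.nd .nil 148755282 .nil) 148755402 .nil) 148755417 (.nd .nil 148755652 .nil)) 148755797 (.nd (.nd (.nd .nil 148755907 .nil) 148756032 .nil) 148756042 (.nd .nil 148756152 .nil))) 148756167 (.nd (.nd (.nd (.nd .nil 148756912 .nil) 148757032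 .nil) 148757047 (.nd .nil 148757277 .nil)) 148757292 (.nd (.nd (.nd .nil 148757402 .nil) 148757412 .nil) 148757672 (.nd .nil 148757782 .nil)))))) 148757917 (.nd (.nd (.nd (.nd (.nd (.nd (.nd .nil 148758027 .nil) 148758162 .nil) 148758172 (.nd (.nd .nil 148758407 .nil) 148758417 .nil)) 148758527 (.nd (.nd (.nd .nil 148758542 .nil) 148758652 .nil) 148758787 (.nd .nil 148758922 .nil))) 148759032 (.nd (.nd (.nd (.nd .nil 148759047 .nil) 148759157 .nil) 148759167 (.nd .nil 148759292 .nil)) 148760037 (.nd (.nd (.nd .nil 148760047 .nil) 148760172 .nil) 148760282 (.nd .nil 148760292 .nil)))) 148760527 (.nd (.nd (.nd (.nd (.nd .nil 148760537 .nil) 148760662 .nil) 148760797 (.nd .nil 148760907 .nil)) 148761152 (.nd (.nd (.nd .nil 148761287 .nil) 148761297 .nil) 148761422 (.nd .nil 148761532 .nil))) 148761542 (.nd (.nd (.nd (.nd .nil 148761777 .nil) 148761787 .nil) 148761912 (.nd .nil 148762037 .nil)) 148762047 (.nd (.nd (.nd .nil 148762157 .nil) 148762172 .nil) 148762282 (.nd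 .nil 148762402 .nil))))) 148763162 (.nd (.nd (.nd (.nd (.nd (.nd .nil 148763172 .nil) 148763282 .nil) 148763297 (.nd .nil 148763407 .nil)) 148763527 (.nd (.nd (.nd .nil 148763542 .nil) 148763787 .nil) 148764032 (.nd .nil 148764167 .nil))) 148764277 (.nd (.nd (.nd (.nd .nil 148764532 .nil) 148764547 .nil) 148764657 (.nd .nil 148764667 .nil)) 148764792 (.nd (.nd (.nd .nil 148764902 .nil) 148764912 .nil) 148765027 (.nd .nil 148765037 .nil)))) 148765162 (.nd (.nd (.nd (.nd (.nd .nil 148765172 .nil) 148765297 .nil) 148765417 (.nd .nil 148765527 .nil)) 150704422 (.nd (.nd (.nd .nil 150704542 .nil) 150704662 .nil) 150704782 (.nd .nil 150707542 .nil))) 150707662 (.nd (.nd (.nd (.nd .nil 150707902 .nil) 150708047 .nil) 150710782 (.nd .nil 150710902 .nil)) 150711047 (.nd (.nd (.nd .nil 150711167 .nil) 150713782 .nil) 150713902 (.nd .nil 150714047 .nil)))))))) 150714287 (.nd (.nd (.nd (.nd (.nd (.nd (.nd (.nd (.nd .nil 150716902 .nil) 150717167 .nil) 150717287 (.nd (.nd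 .nil 150717407 .nil) 152424468 .nil)) 152424473 (.nd (.nd (.nd .nil 152424588 .nil) 152424593 .nil) 152424708 (.nd .nil 152424828 .nil))) 152424833 (.nd (.nd (.nd (.nd .nil 152427588 .nil) 152427593 .nil) 152427828 (.nd .nil 152427833 .nil)) 152427953 (.nd (.nd (.nd .nil 152427973 .nil) 152428093 .nil) 152430708 (.nd .nil 152430713 .nil)))) 152430828 (.nd (.nd (.nd (.nd (.nd .nil 152430953 .nil) 152430973 .nil) 152431213 (.nd .nil 152431218 .nil)) 152433953 (.nd (.nd (.nd .nil 152433973 .nil) 152434093 .nil) 152434098 (.nd .nil 152434213 .nil))) 152434333 (.nd (.nd (.nd (.nd .nil 152434338 .nil) 152436973 .nil) 152437093 (.nd .nil 152437098 .nil)) 152437333 (.nd (.nd (.nd .nil 152437338 .nil) 152437453 .nil) 152437458 (.nd .nil 154532014 .nil))))) 154532019 (.nd (.nd (.nd (.nd (.nd (.nd .nil 154532139 .nil) 154532254 .nil) 154532259 (.nd (.nd .nil 154532379 .nil) 154532399 .nil)) 154535134 (.nd (.nd (.nd .nil 154535139 .nil) 154535259 .nil) 154535379 (.nd .nil 154535399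 .nil))) 154535519 (.nd (.nd (.nd (.nd .nil 154535524 .nil) 154538254 .nil) 154538259 (.nd .nil 154538379 .nil)) 154538519 (.nd (.nd (.nd .nil 154538524 .nil) 154538639 .nil) 154538644 (.nd .nil 154541379 .nil)))) 154541399 (.nd (.nd (.nd (.nd (.nd .nil 154541524 .nil) 154541639 .nil) 154541644 (.nd .nil 154541759 .nil)) 154541764 (.nd (.nd (.nd .nil 154544519 .nil) 154544524 .nil) 154544644 (.nd .nil 154544759 .nil))) 154544764 (.nd (.nd (.nd (.nd .nil 154544879 .nil) 154544884 .nil) 197422596 (.nd .nil 197422716 .nil)) 197422836 (.nd (.nd (.nd .nil 197422956 .nil) 197425716 .nil) 197425836 (.nd .nil 197426076 .nil)))))) 197426221 (.nd (.nd (.nd (.nd (.nd (.nd (.nd .nil 197428956 .nil) 197429076 .nil) 197429221 (.nd (.nd .nil 197429341 .nil) 197431956 .nil)) 197432076 (.nd (.nd (.nd .nil 197432221 .nil) 197432461 .nil) 197435076 (.nd .nil 197435341 .nil))) 197435461 (.nd (.nd (.nd (.nd .nil 197435581 .nil) 199533267 .nil) 199533387 (.nd .nil 199533397 .nil)) 199533507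 (.nd (.nd (.nd .nil 199533517 .nil) 199533627 .nil) 199533637 (.nd .nil 199536387 .nil)))) 199536507 (.nd (.nd (.nd (.nd (.nd .nil 199536517 .nil) 199536627 .nil) 199536637 (.nd .nil 199536757 .nil)) 199536772 (.nd (.nd (.nd .nil 199539507 .nil) 199539627 .nil) 199539637 (.nd .nil 199539757 .nil))) 199539772 (.nd (.nd (.nd (.nd .nil 199539877 .nil) 199539892 .nil) 199542627 (.nd .nil 199542757 .nil)) 199542772 (.nd (.nd (.nd .nil 199542877 .nil) 199542892 .nil) 199543012 (.nd .nil 199543022 .nil))))) 199545772 (.nd (.nd (.nd (.nd (.nd (.nd .nil 199545877 .nil) 199545892 .nil) 199546012 (.nd .nil 199546022 .nil)) 199546132 (.nd (.nd (.nd .nil 199546142 .nil) 201253183 .nil) 201253193 (.nd .nil 201253303 .nil))) 201253313 (.nd (.nd (.nd (.nd .nil 201253433 .nil) 201253448 .nil) 201253553 (.nd .nil 201253568 .nil)) 201253688 (.nd (.nd (.nd .nil 201253698 .nil) 201256303 .nil) 201256313 (.nd .nil 201256433 .nil)))) 201256448 (.nd (.nd (.nd (.nd (.nd .nil 201256553 .nil)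 201256568 .nil) 201256688 (.nd .nil 201256698 .nil)) 201256808 (.nd (.nd (.nd .nil 201256818 .nil) 201259433 .nil) 201259553 (.nd .nil 201259698 .nil))) 201259818 (.nd (.nd (.nd (.nd .nil 201259938 .nil) 201262553 .nil) 201262568 (.nd .nil 201262688 .nil)) 201262698 (.nd (.nd (.nd .nil 201262808 .nil) 201262818 .nil) 201262928 (.nd .nil 201262938 .nil))))))) 201263058 (.nd (.nd (.nd (.nd (.nd (.nd (.nd (.nd .nil 201263073 .nil) 201328836 .nil) 201328971 (.nd (.nd .nil 201329081 .nil) 201329216 .nil)) 201329456 (.nd (.nd (.nd .nil 201329596 .nil) 201329701 .nil) 201329706 (.nd .nil 201329841 .nil))) 201329951 (.nd (.nd (.nd (.nd .nil 201329971 .nil) 201330201 .nil) 201330221 (.nd .nil 201330331 .nil)) 201330336 (.nd (.nd (.nd .nil 201330466 .nil) 201330471 .nil) 201330576 (.nd .nil 201330711 .nil)))) 201330716 (.nd (.nd (.nd (.nd (.nd .nil 201330826 .nil) 201330846 .nil) 201330956 (.nd .nil 201330961 .nil)) 201331091 (.nd (.nd (.nd .nil 201331961 .nil) 201332096 .nil)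 201332341 (.nd .nil 201332451 .nil))) 201332586 (.nd (.nd (.nd (.nd .nil 201332716 .nil) 201332721 .nil) 201332831 (.nd .nil 201332961 .nil)) 201332966 (.nd (.nd (.nd .nil 201333096 .nil) 201333211 .nil) 201333456 (.nd .nil 201333461 .nil))))) 201333591 (.nd (.nd (.nd (.nd (.nd (.nd .nil 201333596 .nil) 201333701 .nil) 201333706 (.nd .nil 201333836 .nil)) 201334081 (.nd (.nd (.nd .nil 201334086 .nil) 201334216 .nil) 201334221 (.nd .nil 201334326 .nil))) 201334331 (.nd (.nd (.nd (.nd .nil 201335221 .nil) 201335331 .nil) 201335466 (.nd .nil 201335576 .nil)) 201335706 (.nd (.nd (.nd .nil 201335711 .nil) 201335846 .nil) 201335951 (.nd .nil 201335956 .nil)))) 201336086 (.nd (.nd (.nd (.nd (.nd .nil 201336201 .nil) 201336336 .nil) 201336341 (.nd .nil 201336471 .nil)) 201336716 (.nd (.nd (.nd .nil 201336721 .nil) 201336826 .nil) 201336831 (.nd .nil 201336961 .nil))) 201336966 (.nd (.nd (.nd (.nd .nil 201337076 .nil) 201337096 .nil) 201337206 (.nd .nil 201337451 .nil)) 201337456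 (.nd (.nd (.nd .nil 201338211 .nil) 201338346 .nil) 201338456 (.nd .nil 201338701 .nil)))))) 201338836 (.nd (.nd (.nd (.nd (.nd (.nd (.nd .nil 201338966 .nil) 201338971 .nil) 201339076 (.nd (.nd .nil 201339216 .nil) 201339326 .nil)) 201339346 (.nd (.nd (.nd .nil 201339461 .nil) 201339466 .nil) 201339576 (.nd .nil 201339596 .nil))) 201339706 (.nd (.nd (.nd (.nd .nil 201339951 .nil) 201339956 .nil) 201340201 (.nd .nil 201340221 .nil)) 201340331 (.nd (.nd (.nd .nil 201340336 .nil) 201340466 .nil) 201340471 (.nd .nil 201340576 .nil)))) 201341336 (.nd (.nd (.nd (.nd (.nd .nil 201341581 .nil) 201341716 .nil) 201341826 (.nd .nil 201341956 .nil)) 201341961 (.nd (.nd (.nd .nil 201342091 .nil) 201342206 .nil) 201342336 (.nd .nil 201342341 .nil))) 201342451 (.nd (.nd (.nd (.nd .nil 201342586 .nil) 201342591 .nil) 201342701 (.nd .nil 201342721 .nil)) 201342831 (.nd (.nd (.nd .nil 201342836 .nil) 201342966 .nil) 201343211 (.nd .nil 201343216 .nil))))) 201343346 (.nd (.nd (.nd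 (.nd (.nd (.nd .nil 201343591 .nil) 201343596 .nil) 201343701 (.nd .nil 201343706 .nil)) 203360734 (.nd (.nd (.nd .nil 203360744 .nil) 203360854 .nil) 203360864 (.nd .nil 203360984 .nil))) 203360999 (.nd (.nd (.nd (.nd .nil 203361104 .nil) 203363864 .nil) 203364104 (.nd .nil 203364119 .nil)) 203364239 (.nd (.nd (.nd .nil 203364249 .nil) 203364359 .nil) 203364369 (.nd .nil 203366984 .nil)))) 203366999 (.nd (.nd (.nd (.nd (.nd .nil 203367104 .nil) 203367119 .nil) 203367249 (.nd .nil 203367479 .nil)) 203367489 (.nd (.nd (.nd .nil 203370239 .nil) 203370249 .nil) 203370359 (.nd .nil 203370369 .nil))) 203370479 (.nd (.nd (.nd (.nd .nil 203370489 .nil) 203370609 .nil) 203373239 (.nd .nil 203373249 .nil)) 203373369 (.nd (.nd (.nd .nil 203373609 .nil) 203373624 .nil) 203373729 (.nd .nil 203373744 .nil))))))))))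

def stepOK (x : SState) : Bool :=
  (tree.mem (enc (tr0 x))) && (tree.mem (enc (tr1 x))) && (tree.mem (enc (tr2 x)))
    && (tree.mem (enc (tr3 x))) && (tree.mem (enc (tr4 x))) && !(decide (x.1 = x.2.2.1))

set_option maxRecDepth 100000 in
set_option maxHeartbeats 4000000 in
lemma bigcheck : tree.lst.all (fun k => stepOK (dec k)) = true := by decide

set_option maxRecDepth 10000 in
lemma inv_all (n : ℕ) : tree.mem (enc (sfun n)) = true := by
  induction n using Nat.strong_induction_on with
  | _ n ih =>
    rcases Nat.lt_or_ge n 5 with h | h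
    · have h5 : n = 0 ∨ n = 1 ∨ n = 2 ∨ n = 3 ∨ n = 4 := by omega
      rcases h5 with rfl | rfl | rfl | rfl | rfl <;> decide
    · have hq : (n/5 - 1) + 1 < n := by omega
      have hmem := ih _ hq
      have hin := NT.mem_lst _ _ hmem
      have hgood := List.all_eq_true.mp bigcheck _ hin
      simp only [dec_enc] at hgood
      simp only [stepOK, Bool.and_eq_true] at hgood
      obtain ⟨⟨⟨⟨⟨g0, g1⟩, g2⟩, g3⟩, g4⟩, gout⟩ := hgood
      have hd : n % 5 = 0 ∨ n % 5 = 1 ∨ n % 5 = 2 ∨ n % 5 = 3 ∨ n % 5 = 4 := by omega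
      rcases hd with hd | hd | hd | hd | hd
      · rw [show n = 5*((n/5 - 1)+1)+0 by omega, step0]; exact g0
      · rw [show n = 5*((n/5 - 1)+1)+1 by omega, step1]; exact g1
      · rw [show n = 5*((n/5 - 1)+1)+2 by omega, step2]; exact g2
      · rw [show n = 5*((n/5 - 1)+1)+3 by omega, step3]; exact g3
      · rw [show n = 5*((n/5 - 1)+1)+4 by omega, step4]; exact g4

lemma out_ne (n : ℕ) : c0 n ≠ c2 n := by
  have hin := NT.mem_lst _ _ (inv_all n)
  have hgood := List.all_eq_true.mp bigcheck _ hin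
  simp only [dec_enc] at hgood
  simp only [stepOK, Bool.and_eq_true] at hgood
  have hout := hgood.2
  simp only [sfun, Bool.not_eq_true', decide_eq_false_iff_not] at hout
  exact of_decide_eq_false hout

end Motzkin25aux

open Motzkin25aux in
/-- No Motzkin number is divisible by `25`. -/
theorem motzkin_not_dvd_25 (M : ℕ → ℤ)
    (hM0 : M 0 = 1) (hM1 : M 1 = 1)
    (hrec : ∀ n : ℕ, 2 ≤ n →
      ((n : ℤ) + 2) * M n = (2 * (n : ℤ) + 1) * M (n - 1) + 3 * ((n : ℤ) - 1) * M (n - 2)) (n : ℕ) :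
    ¬ ((25 : ℤ) ∣ M n) := by
  have MeqD : ∀ k : ℕ, M k = T k (k:ℤ) - T k ((k:ℤ)+2) := by
    intro k
    induction k using Nat.strong_induction_on with
    | _ k ih =>
      match k with
      | 0 =>
        rw [hM0]
        norm_num [T]
      | 1 =>
        rw [hM1]
        rw [show (1:ℕ) = 0+1 from rfl]
        push_cast
        simp only [T]
        norm_num
      | (k+2) =>
        have hr := hrec (k+2) (by omega)
        have h1 := ih (k+1) (by omega)
        have h0 := ih k (by omega)
        have hh := T_holo k
        rw [show (k+2) - 1 = k+1 from rfl, show (k+2) - 2 = k from rfl] at hr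
        rw [h1, h0] at hr
        have hne : ((k:ℤ)+4) ≠ 0 := by positivity
        apply mul_left_cancel₀ hne
        push_cast at hr hh ⊢
        ring_nf at hr hh ⊢
        linear_combination hr - hh
  intro hdvd
  have hz : ((M n : ℤ) : ZMod 25) = 0 := (ZMod.intCast_zmod_eq_zero_iff_dvd _ _).mpr hdvd
  rw [MeqD n] at hz
  push_cast at hz
  have : c0 n = c2 n := by
    simp only [c0, c2]
    linear_combination hz
  exact out_ne n this
end

section
/- No Catalan number is congruent to 3 modulo 4: for all n ≥ 0, C(n) ≢ 3 (mod 4). -/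
/-!
Pairing the terms `i` and `n - i` of Segner's recurrence `C(n+1) = ∑ C(i) C(n-i)` gives
`C(2m+2) = 2 S` and `C(2m+1) = 2 S' + C(m)²`, so by induction `C(n)` is odd exactly when `n + 1`
is a power of two. Modulo 4 only `C(2m+1)` with `C(m)` odd needs care: then `m + 1` is a power of
two, and no term `C(i) C(2m-i)` with `i < m` is odd, because `(i + 1) + (2m - i + 1) = 2(m + 1)` is
not a sum of two distinct powers of two. Hence `2 S' ≡ 0` and `C(2m+1) ≡ C(m)² ≡ 1`.
-/

open Finset

namespace Nat

theorem isPowerOfTwo_two_mul_iff {n : ℕ} : (2 * n).isPowerOfTwo ↔ n.isPowerOfTwo := by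
  refine ⟨fun ⟨k, hk⟩ => ?_, fun h => mul_comm n 2 ▸ isPowerOfTwo_mul_two_of_isPowerOfTwo h⟩
  cases k with
  | zero => omega
  | succ k => exact ⟨k, by rw [pow_succ] at hk; omega⟩

theorem eq_one_of_isPowerOfTwo_of_odd {n : ℕ} (h : n.isPowerOfTwo) (hn : Odd n) : n = 1 := by
  obtain ⟨k, rfl⟩ := h
  cases k with
  | zero => rfl
  | succ k =>
    rw [Nat.odd_iff, pow_succ] at hn
    omega

theorem eq_of_isPowerOfTwo_add {a b : ℕ} (ha : a.isPowerOfTwo) (hb : b.isPowerOfTwo)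
    (hab : (a + b).isPowerOfTwo) : a = b := by
  suffices ∀ x y z : ℕ, x < y → 2 ^ x + 2 ^ y ≠ 2 ^ z by
    obtain ⟨x, rfl⟩ := ha
    obtain ⟨y, rfl⟩ := hb
    obtain ⟨z, hz⟩ := hab
    rcases lt_trichotomy x y with hxy | rfl | hxy
    · exact absurd hz (this x y z hxy)
    · rfl
    · exact absurd (add_comm (2 ^ x) _ ▸ hz) (this y x z hxy)
  intro x y z hxy hz
  have hxy' : 2 ^ x < 2 ^ y := pow_lt_pow_right₀ one_lt_two hxy
  have hx : 0 < 2 ^ x := by positivity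
  have hyz : 2 ^ y < 2 ^ z := by omega
  have hzy : 2 ^ z < 2 ^ (y + 1) := by rw [pow_succ]; omega
  rw [pow_lt_pow_iff_right₀ one_lt_two] at hyz hzy
  omega

end Nat

section SymmetricSums

variable {M : Type*} [AddCommMonoid M] (f : ℕ → M) (m : ℕ)

theorem Finset.sum_range_two_mul_add_two_of_symm (hf : ∀ i ≤ 2 * m + 1, f (2 * m + 1 - i) = f i) :
    ∑ i ∈ range (2 * m + 2), f i = 2 • ∑ i ∈ range (m + 1), f i := by
  have hupper : ∑ i ∈ range (m + 1), f (m + 1 + i) = ∑ i ∈ range (m + 1), f i := by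
    rw [← sum_range_reflect]
    refine sum_congr rfl fun i hi => ?_
    rw [mem_range] at hi
    rw [← hf _ (by omega)]
    congr 1
    omega
  rw [show 2 * m + 2 = (m + 1) + (m + 1) by ring, sum_range_add, hupper, two_nsmul]

theorem Finset.sum_range_two_mul_add_one_of_symm (hf : ∀ i ≤ 2 * m, f (2 * m - i) = f i) :
    ∑ i ∈ range (2 * m + 1), f i = 2 • ∑ i ∈ range m, f i + f m := by
  have hupper : ∑ i ∈ range m, f (m + 1 + i) = ∑ i ∈ range m, f i := by
    rw [← sum_range_reflect]
    refine sum_congr rfl fun i hi => ?_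
    rw [mem_range] at hi
    rw [← hf _ (by omega)]
    congr 1
    omega
  rw [show 2 * m + 1 = m + (m + 1) by ring, sum_range_add, sum_range_succ', two_nsmul]
  simp only [add_zero, ← add_assoc, add_right_comm m _ 1]
  rw [hupper, add_right_comm]

end SymmetricSums

theorem catalan_succ_eq_sum_range (n : ℕ) :
    catalan (n + 1) = ∑ i ∈ range (n + 1), catalan i * catalan (n - i) := by
  rw [catalan_succ', Nat.sum_antidiagonal_eq_sum_range_succ_mk]

theorem catalan_mul_catalan_sub_symm {n i : ℕ} (hi : i ≤ n) :
    catalan (n - i) * catalan (n - (n - i)) = catalan i * catalan (n - i) := by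
  rw [Nat.sub_sub_self hi, mul_comm]

theorem catalan_two_mul_add_two (m : ℕ) :
    catalan (2 * m + 2) = 2 * ∑ i ∈ range (m + 1), catalan i * catalan (2 * m + 1 - i) := by
  rw [catalan_succ_eq_sum_range, sum_range_two_mul_add_two_of_symm _ _
    fun i hi => catalan_mul_catalan_sub_symm hi, smul_eq_mul]

theorem catalan_two_mul_add_one (m : ℕ) :
    catalan (2 * m + 1) = 2 * ∑ i ∈ range m, catalan i * catalan (2 * m - i) + catalan m ^ 2 := by
  rw [catalan_succ_eq_sum_range, sum_range_two_mul_add_one_of_symm _ _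
    fun i hi => catalan_mul_catalan_sub_symm hi, smul_eq_mul, two_mul m, Nat.add_sub_cancel, sq]

theorem odd_catalan_iff : ∀ n : ℕ, Odd (catalan n) ↔ (n + 1).isPowerOfTwo
  | 0 => by simp [catalan_zero, Nat.isPowerOfTwo_one]
  | n + 1 => by
    obtain ⟨m, rfl | rfl⟩ := Nat.even_or_odd' n
    · rw [catalan_two_mul_add_one, show 2 * m + 1 + 1 = 2 * (m + 1) by ring,
        Nat.isPowerOfTwo_two_mul_iff, ← odd_catalan_iff m]
      simp [Nat.odd_add', sq, Nat.odd_mul]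
    · rw [show 2 * m + 1 + 1 = 2 * m + 2 by ring, catalan_two_mul_add_two]
      refine iff_of_false (by simp [parity_simps]) fun h => ?_
      have := Nat.eq_one_of_isPowerOfTwo_of_odd h (by simp [parity_simps])
      omega
  decreasing_by omega

theorem even_catalan_mul_catalan_of_ne {i j : ℕ} (hij : i ≠ j) (h : (i + j + 2).isPowerOfTwo) :
    Even (catalan i * catalan j) := by
  by_contra hodd
  obtain ⟨hi, hj⟩ := Nat.odd_mul.mp (Nat.not_even_iff_odd.mp hodd)
  rw [odd_catalan_iff] at hi hj
  have := Nat.eq_of_isPowerOfTwo_add hi hj (by convert h using 1; ring)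
  omega

theorem catalan_mod_four_ne_three (n : ℕ) : catalan n % 4 ≠ 3 := by
  obtain ⟨m, rfl | rfl⟩ := Nat.even_or_odd' n
  · cases m with
    | zero => simp [catalan_zero]
    | succ m => rw [show 2 * (m + 1) = 2 * m + 2 by ring, catalan_two_mul_add_two]; omega
  rw [catalan_two_mul_add_one]
  rcases Nat.even_or_odd (catalan m) with ⟨t, ht⟩ | hodd
  · rw [ht, show (t + t) ^ 2 = 4 * t ^ 2 by ring]
    omega
  · have hsum : 2 ∣ ∑ i ∈ range m, catalan i * catalan (2 * m - i) := by
      refine dvd_sum fun i hi => (even_catalan_mul_catalan_of_ne ?_ ?_).two_dvd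
      · rw [mem_range] at hi; omega
      · rw [show i + (2 * m - i) + 2 = 2 * (m + 1) by rw [mem_range] at hi; omega,
          Nat.isPowerOfTwo_two_mul_iff, ← odd_catalan_iff]
        exact hodd
    obtain ⟨s, hs⟩ := hsum
    obtain ⟨t, ht⟩ := hodd
    rw [hs, ht, show (2 * t + 1) ^ 2 = 4 * (t ^ 2 + t) + 1 by ring]
    omega

/-- No Catalan number is congruent to `3` modulo `4`. -/
theorem catalan_not_three_mod_four (n : ℕ) : ¬ (catalan n ≡ 3 [MOD 4]) :=
  catalan_mod_four_ne_three n
end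

section
/- No Catalan number is congruent to 9 modulo 16: for all n ≥ 0, C(n) ≢ 9 (mod 16). -/
/-!
Since `(2n+1) · C(n) = (2n+1).choose (n+1)`, Kummer's theorem gives `v₂(C(n)) = s₂(n+1) - 1`
with `s₂` the binary digit sum, so an odd Catalan number has `n + 1 = 2^k`. For these,
`centralBinom (2^k) = 2 (2^(k+1) - 1) C(2^k - 1)`, and `centralBinom (2^k) ≡ 6 (mod 32)` for
`k ≥ 1`: by Vandermonde `centralBinom (4b) = ∑ (4b).choose i ^ 2`, and for `b = 2^j` the terms
with `b ∤ i` have `8 ∣ (4b).choose i`, while `(4b).choose b` is `4` times an odd number; hence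
`centralBinom (4b) ≡ centralBinom (2b) ^ 2 + 2 (mod 32)`. So `C(2^k - 1) ≡ 13 (mod 16)` for
`k ≥ 3`, and the remaining odd values `C(0) = C(1) = 1`, `C(3) = 5` are not `9` either.
-/

open Finset

namespace Nat

theorem eq_zero_of_sum_digits_eq_zero {b m : ℕ} (h : (b.digits m).sum = 0) : m = 0 := by
  by_contra hm
  exact getLast_digit_ne_zero b hm (List.sum_eq_zero_iff.mp h _ (List.getLast_mem _))

theorem digits_two_two_mul_add_one (m : ℕ) : digits 2 (2 * m + 1) = 1 :: digits 2 m := by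
  simpa [add_comm] using digits_add 2 one_lt_two 1 m one_lt_two (Or.inl one_ne_zero)

theorem sum_digits_two_two_mul (m : ℕ) : (digits 2 (2 * m)).sum = (digits 2 m).sum := by
  rcases eq_or_ne m 0 with rfl | hm
  · rfl
  · simpa using congrArg List.sum (digits_add 2 one_lt_two 0 m two_pos (Or.inr hm))

theorem exists_eq_two_pow_of_sum_digits_eq_one {m : ℕ} (h : (digits 2 m).sum = 1) :
    ∃ k, m = 2 ^ k := by
  induction m using Nat.strong_induction_on with
  | _ m ih =>
    obtain ⟨q, rfl | rfl⟩ := even_or_odd' m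
    · rw [sum_digits_two_two_mul] at h
      have hq : q ≠ 0 := by rintro rfl; simp at h
      obtain ⟨k, rfl⟩ := ih q (by omega) h
      exact ⟨k + 1, by ring⟩
    · rw [digits_two_two_mul_add_one, List.sum_cons] at h
      obtain rfl : q = 0 := eq_zero_of_sum_digits_eq_zero (b := 2) (by omega)
      exact ⟨0, rfl⟩

theorem pow_dvd_choose_prime_pow_of_not_pow_dvd {p n m x : ℕ} (hp : p.Prime) (hx0 : x ≠ 0)
    (hxn : x ≤ p ^ n) (hm : ¬ p ^ m ∣ x) : p ^ (n + 1 - m) ∣ (p ^ n).choose x := by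
  have hlt : x.factorization p < m := by
    by_contra! hle
    exact hm ((hp.pow_dvd_iff_le_factorization hx0).mpr hle)
  rw [hp.pow_dvd_iff_le_factorization (choose_ne_zero hxn),
    factorization_choose_prime_pow hp hxn hx0]
  omega

theorem factorization_choose_prime_pow_prime_pow {p n m : ℕ} (hp : p.Prime) (hmn : m ≤ n) :
    ((p ^ n).choose (p ^ m)).factorization p = n - m := by
  rw [factorization_choose_prime_pow hp (pow_le_pow_right₀ hp.one_lt.le hmn)
      (pow_ne_zero _ hp.ne_zero),
    hp.factorization_pow, Finsupp.single_eq_same]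

theorem natCast_sq_eq_zero_of_eight_dvd {c : ℕ} (h : 8 ∣ c) : (c : ZMod 32) ^ 2 = 0 := by
  obtain ⟨u, rfl⟩ := h
  rw [show ((8 * u : ℕ) : ZMod 32) ^ 2 = 64 * (u : ZMod 32) ^ 2 by push_cast; ring]
  rw [show (64 : ZMod 32) = 0 by decide, zero_mul]

theorem natCast_sq_eq_sixteen_of_factorization_two_eq_two {c : ℕ} (hc : c ≠ 0)
    (h : c.factorization 2 = 2) :
    (c : ZMod 32) ^ 2 = 16 := by
  obtain ⟨u, hu, rfl⟩ : ∃ u, ¬ 2 ∣ u ∧ c = 4 * u := by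
    have hodd := not_dvd_ordCompl prime_two hc
    have hc' := ordProj_mul_ordCompl_eq_self c 2
    rw [h] at hodd hc'
    exact ⟨c / 2 ^ 2, hodd, hc'.symm⟩
  obtain ⟨v, rfl⟩ : ∃ v, u = 2 * v + 1 := ⟨u / 2, by omega⟩
  rw [show ((4 * (2 * v + 1) : ℕ) : ZMod 32) ^ 2 = 64 * ((v : ZMod 32) ^ 2 + v) + 16 by
    push_cast; ring]
  rw [show (64 : ZMod 32) = 0 by decide, zero_mul, zero_add]

theorem centralBinom_two_pow_add_two (j : ℕ) :
    (centralBinom (2 ^ (j + 2)) : ZMod 32) = (centralBinom (2 ^ (j + 1)) : ZMod 32) ^ 2 + 2 := by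
  set b := 2 ^ j with hb
  have hb0 : 0 < b := by positivity
  have h4b : 2 ^ (j + 2) = 4 * b := by rw [pow_add]; ring
  have h2b : 2 ^ (j + 1) = 2 * b := by rw [pow_succ]; ring
  set S := (range 5).image (b * ·)
  have hS : S ⊆ range (4 * b + 1) := by
    intro i hi
    obtain ⟨c, hc, rfl⟩ := mem_image.mp hi
    rw [mem_range] at hc ⊢
    nlinarith
  have hvanish : ∀ i ∈ range (4 * b + 1), i ∉ S → ((4 * b).choose i : ZMod 32) ^ 2 = 0 := by
    intro i hi hiS
    have hib : ¬ 2 ^ j ∣ i := by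
      rintro ⟨c, rfl⟩
      refine hiS (mem_image.mpr ⟨c, mem_range.mpr ?_, rfl⟩)
      rw [mem_range] at hi
      by_contra! hc
      nlinarith
    have hi0 : i ≠ 0 := by rintro rfl; exact hib (dvd_zero _)
    apply natCast_sq_eq_zero_of_eight_dvd
    have := pow_dvd_choose_prime_pow_of_not_pow_dvd (n := j + 2) prime_two hi0
      (by rw [mem_range] at hi; omega) hib
    rwa [h4b, show j + 2 + 1 - j = 3 by omega] at this
  have hquarter : ((4 * b).choose b : ZMod 32) ^ 2 = 16 := by
    apply natCast_sq_eq_sixteen_of_factorization_two_eq_two (choose_ne_zero (by omega))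
    rw [← h4b, hb, factorization_choose_prime_pow_prime_pow prime_two (by omega)]
    omega
  have hsymm : (4 * b).choose (b * 3) = (4 * b).choose b := choose_symm_of_eq_add (by ring)
  have hmid : (4 * b).choose (b * 2) = centralBinom (2 * b) := by
    rw [centralBinom_eq_two_mul_choose]; ring_nf
  rw [centralBinom_eq_two_mul_choose, ← sum_range_choose_sq, h4b, h2b]
  push_cast
  rw [← sum_subset hS hvanish, sum_image (fun x _ y _ h => Nat.eq_of_mul_eq_mul_left hb0 h)]
  simp only [sum_range_succ, sum_range_zero]
  rw [mul_zero, mul_one, hsymm, hquarter, mul_comm b 4, choose_zero_right, choose_self, hmid]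
  push_cast
  have h32 : (32 : ZMod 32) = 0 := by decide
  linear_combination h32

theorem centralBinom_two_pow_succ_modEq_six (j : ℕ) :
    centralBinom (2 ^ (j + 1)) ≡ 6 [MOD 32] := by
  rw [← ZMod.natCast_eq_natCast_iff]
  induction j with
  | zero => decide
  | succ j ih => rw [centralBinom_two_pow_add_two, ih]; decide

end Nat

open Nat

theorem catalan_pos (n : ℕ) : 0 < catalan n :=
  pos_of_mul_pos_right ((succ_mul_catalan_eq_centralBinom n).symm ▸ centralBinom_pos n)
    n.succ.zero_le

theorem choose_two_mul_add_one_eq_mul_catalan (n : ℕ) :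
    (2 * n + 1).choose (n + 1) = (2 * n + 1) * catalan n := by
  apply Nat.eq_of_mul_eq_mul_right (by omega : 0 < n + 1)
  rw [← add_one_mul_choose_eq, ← centralBinom_eq_two_mul_choose,
    ← succ_mul_catalan_eq_centralBinom]
  ring

theorem padicValNat_two_catalan (n : ℕ) :
    padicValNat 2 (catalan n) = (digits 2 (n + 1)).sum - 1 := by
  have h := sub_one_mul_padicValNat_choose_eq_sub_sum_digits' (p := 2) (k := n + 1) (n := n)
  rw [show n + (n + 1) = 2 * n + 1 by ring, choose_two_mul_add_one_eq_mul_catalan,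
    padicValNat.mul (by omega) (catalan_pos n).ne',
    padicValNat.eq_zero_of_not_dvd (by omega), digits_two_two_mul_add_one, List.sum_cons] at h
  omega

theorem exists_succ_eq_two_pow_of_odd_catalan {n : ℕ} (h : Odd (catalan n)) :
    ∃ k, n + 1 = 2 ^ k := by
  have hval := padicValNat_two_catalan n
  rw [padicValNat.eq_zero_of_not_dvd h.not_two_dvd_nat] at hval
  have hpos : (digits 2 (n + 1)).sum ≠ 0 := fun h0 =>
    n.succ_ne_zero (eq_zero_of_sum_digits_eq_zero h0)
  exact exists_eq_two_pow_of_sum_digits_eq_one (by omega)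

theorem centralBinom_succ_eq_mul_catalan (n : ℕ) :
    centralBinom (n + 1) = 2 * (2 * n + 1) * catalan n := by
  apply Nat.eq_of_mul_eq_mul_left (by omega : 0 < n + 1)
  rw [succ_mul_centralBinom_succ, ← succ_mul_catalan_eq_centralBinom]
  ring

theorem catalan_modEq_thirteen_of_succ_eq_two_pow {n k : ℕ} (hn : n + 1 = 2 ^ k) (hk : 3 ≤ k) :
    catalan n ≡ 13 [MOD 16] := by
  have hsix : centralBinom (n + 1) ≡ 6 [MOD 32] := by
    obtain ⟨j, rfl⟩ : ∃ j, k = j + 1 := ⟨k - 1, by omega⟩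
    rw [hn]; exact centralBinom_two_pow_succ_modEq_six j
  obtain ⟨t, ht⟩ : 8 ∣ n + 1 := hn ▸ (Nat.pow_dvd_pow 2 hk : 2 ^ 3 ∣ 2 ^ k)
  have key : centralBinom (n + 1) + 2 * catalan n = 32 * (t * catalan n) := by
    calc centralBinom (n + 1) + 2 * catalan n = 4 * ((n + 1) * catalan n) := by
          rw [centralBinom_succ_eq_mul_catalan]; ring
      _ = 32 * (t * catalan n) := by rw [ht]; ring
  unfold Nat.ModEq at hsix ⊢
  omega

/-- No Catalan number is congruent to `9` modulo `16`. -/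
theorem catalan_not_nine_mod_sixteen (n : ℕ) : ¬ (catalan n ≡ 9 [MOD 16]) := by
  intro h
  have hodd : Odd (catalan n) := Nat.odd_iff.mpr (by unfold Nat.ModEq at h; omega)
  obtain ⟨k, hk⟩ := exists_succ_eq_two_pow_of_odd_catalan hodd
  rcases lt_or_ge k 3 with hk3 | hk3
  · have hn : n = 0 ∨ n = 1 ∨ n = 3 := by interval_cases k <;> omega
    rcases hn with rfl | rfl | rfl <;>
      simp [catalan_zero, catalan_one, catalan_three, Nat.ModEq] at h
  · have h13 := catalan_modEq_thirteen_of_succ_eq_two_pow hk hk3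
    exact absurd (h.symm.trans h13) (by decide)
end
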